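/- arXiv:2312.12011 — 8 statements merged into one kernel-verified Lean document; each statement's English description precedes it below -/
import Mathlib

section
/- For all integers n ≥ 0 and α ≥ 0, the number of overpartition triples with odd parts satisfies OPT(2^α(4n+3)) ≡ 0 (mod 4). -/
/-- An overpartition with odd parts, encoded as a pair of multisets of odd
(hence positive) integers: the overlined parts (which are distinct, since the
last occurrence of each part size may be overlined) and the non-overlined
parts. -/
def IsOddOverpartition (p : Multiset ℕ × Multiset ℕ) : Prop :=
  p.1.Nodup ∧ (∀ x ∈ p.1, Odd x) ∧ (∀ x ∈ p.2, Odd x)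

/-- `OPT k n` is the number of overpartition `k`-tuples of `n` with odd parts,
with generating function `∏_{i≥1} ((1+q^{2i-1})/(1-q^{2i-1}))^k`. -/
noncomputable def OPT (k n : ℕ) : ℕ :=
  Set.ncard {f : Fin k → Multiset ℕ × Multiset ℕ |
    (∀ i, IsOddOverpartition (f i)) ∧ (∑ i, ((f i).1.sum + (f i).2.sum)) = n}

namespace OPTProof

/-! ### A general counting lemma: a finite set carrying two commuting
fixed-point-free involutions whose composite is also fixed-point-free has
cardinality divisible by 4. -/

lemma four_dvd_card {α : Type*} [DecidableEq α] (f g : α → α) :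
    ∀ (n : ℕ) (s : Finset α), s.card ≤ n →
    (∀ x ∈ s, f x ∈ s) → (∀ x ∈ s, g x ∈ s) →
    (∀ x ∈ s, f (f x) = x) → (∀ x ∈ s, g (g x) = x) →
    (∀ x ∈ s, f (g x) = g (f x)) →
    (∀ x ∈ s, f x ≠ x) → (∀ x ∈ s, g x ≠ x) → (∀ x ∈ s, f x ≠ g x) →
    4 ∣ s.card := by
  intro n
  induction n with
  | zero => intro s h _ _ _ _ _ _ _ _; simp [Nat.le_zero.mp h]
  | succ n ih =>
    intro s hcard hf hg hff hgg hfg hne1 hne2 hne3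
    rcases s.eq_empty_or_nonempty with rfl | ⟨x, hx⟩
    · simp
    have hfx := hf x hx
    have hgx := hg x hx
    have hfgx := hf _ hgx
    -- distinctness of the four orbit elements
    have d1 : f x ≠ x := hne1 x hx
    have d2 : g x ≠ x := hne2 x hx
    have d3 : f x ≠ g x := hne3 x hx
    have d4 : f (g x) ≠ x := by
      intro h
      have := congrArg f h
      rw [hff _ hgx] at this
      exact d3 this.symm
    have d5 : f (g x) ≠ f x := by
      intro h
      have := congrArg f h
      rw [hff _ hgx, hff _ hx] at this
      exact d2 this
    have d6 : f (g x) ≠ g x := by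
      intro h
      have := congrArg g h
      rw [hgg _ hx, ← hfg _ hgx, hgg _ hx] at this
      exact d1 this
    set T : Finset α := {x, f x, g x, f (g x)} with hT
    have hTsub : T ⊆ s := by
      intro y hy
      simp only [hT, Finset.mem_insert, Finset.mem_singleton] at hy
      rcases hy with rfl | rfl | rfl | rfl <;> assumption
    have hTcard : T.card = 4 := by
      rw [hT]
      rw [Finset.card_insert_of_notMem (by simp [d1.symm, d2.symm, d4.symm]),
        Finset.card_insert_of_notMem (by simp [d3, d5.symm]),
        Finset.card_insert_of_notMem (by simp [d6.symm]),
        Finset.card_singleton]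
    -- membership in T is preserved backwards by f and g
    have hTf : ∀ y ∈ s, f y ∈ T → y ∈ T := by
      intro y hys hyT
      simp only [hT, Finset.mem_insert, Finset.mem_singleton] at hyT ⊢
      rcases hyT with h | h | h | h
      · right; left; rw [← h, hff _ hys]
      · left; have := congrArg f h; rwa [hff _ hys, hff _ hx] at this
      · right; right; right
        have := congrArg f h; rwa [hff _ hys] at this
      · right; right; left
        have := congrArg f h; rwa [hff _ hys, hff _ hgx] at this
    have hTg : ∀ y ∈ s, g y ∈ T → y ∈ T := by
      intro y hys hyT
      simp only [hT, Finset.mem_insert, Finset.mem_singleton] at hyT ⊢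
      rcases hyT with h | h | h | h
      · right; right; left; rw [← h, hgg _ hys]
      · right; right; right
        have := congrArg g h
        rw [hgg _ hys, ← hfg _ hx] at this
        exact this
      · left; have := congrArg g h; rwa [hgg _ hys, hgg _ hx] at this
      · right; left
        have := congrArg g h
        rw [hgg _ hys, ← hfg _ hgx, hgg _ hx] at this
        exact this
    set s' : Finset α := s \ T with hs'
    have hs'card : s'.card = s.card - 4 := by rw [hs', Finset.card_sdiff_of_subset hTsub, hTcard]
    have h4le : 4 ≤ s.card := by
      calc 4 = T.card := hTcard.symm
      _ ≤ s.card := Finset.card_le_card hTsub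
    have hmem : ∀ y, y ∈ s' ↔ (y ∈ s ∧ y ∉ T) := by intro y; simp [hs']
    have hdvd : 4 ∣ s'.card := by
      apply ih s'
      · omega
      · intro y hy; rw [hmem] at hy ⊢
        exact ⟨hf y hy.1, fun hc => hy.2 (hTf y hy.1 hc)⟩
      · intro y hy; rw [hmem] at hy ⊢
        exact ⟨hg y hy.1, fun hc => hy.2 (hTg y hy.1 hc)⟩
      · intro y hy; exact hff y ((hmem y).mp hy).1
      · intro y hy; exact hgg y ((hmem y).mp hy).1
      · intro y hy; exact hfg y ((hmem y).mp hy).1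
      · intro y hy; exact hne1 y ((hmem y).mp hy).1
      · intro y hy; exact hne2 y ((hmem y).mp hy).1
      · intro y hy; exact hne3 y ((hmem y).mp hy).1
    omega

/-! ### Overpartition components -/

abbrev OP := Multiset ℕ × Multiset ℕ
abbrev TT := Fin 3 → OP

def pts (p : OP) : Multiset ℕ := p.1 + p.2

lemma pts_sum (p : OP) : (pts p).sum = p.1.sum + p.2.sum := Multiset.sum_add _ _

lemma mem_pts {a : ℕ} {p : OP} : a ∈ pts p ↔ a ∈ p.1 ∨ a ∈ p.2 := Multiset.mem_add

lemma pts_eq_zero {p : OP} (h : pts p = 0) : p = (0, 0) := by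
  have h1 : p.1 = 0 := Multiset.le_zero.mp (h ▸ Multiset.le_add_right p.1 p.2)
  have h2 : p.2 = 0 := Multiset.le_zero.mp (h ▸ Multiset.le_add_left p.2 p.1)
  exact Prod.ext h1 h2

/-- toggle the overline on the part of size `v`. -/
def tog (v : ℕ) (p : OP) : OP :=
  if v ∈ p.1 then (p.1.erase v, v ::ₘ p.2) else (v ::ₘ p.1, p.2.erase v)

lemma pts_tog {v : ℕ} {p : OP} (hv : v ∈ pts p) : pts (tog v p) = pts p := by
  unfold tog pts
  split_ifs with h
  · show p.1.erase v + (v ::ₘ p.2) = p.1 + p.2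
    rw [Multiset.add_cons, ← Multiset.cons_add, Multiset.cons_erase h]
  · have h2 : v ∈ p.2 := (mem_pts.mp hv).resolve_left h
    show (v ::ₘ p.1) + p.2.erase v = p.1 + p.2
    rw [Multiset.cons_add, ← Multiset.add_cons, Multiset.cons_erase h2]

lemma mem_tog_self {v : ℕ} {p : OP} (hnd : p.1.Nodup) : v ∈ (tog v p).1 ↔ v ∉ p.1 := by
  unfold tog; split_ifs with h <;> simp [h, hnd.notMem_erase]

lemma mem_tog_ne {v w : ℕ} {p : OP} (hwv : w ≠ v) : w ∈ (tog v p).1 ↔ w ∈ p.1 := by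
  unfold tog; split_ifs with h <;> simp [Multiset.mem_erase_of_ne hwv, Multiset.mem_cons, hwv]

lemma tog_tog {v : ℕ} {p : OP} (hnd : p.1.Nodup) (hv : v ∈ pts p) : tog v (tog v p) = p := by
  by_cases h : v ∈ p.1
  · have e1 : tog v p = (p.1.erase v, v ::ₘ p.2) := if_pos h
    rw [e1]
    unfold tog
    rw [if_neg (by simpa using hnd.notMem_erase)]
    exact Prod.ext (Multiset.cons_erase h) (Multiset.erase_cons_head v p.2)
  · have h2 : v ∈ p.2 := (mem_pts.mp hv).resolve_left h
    have e1 : tog v p = (v ::ₘ p.1, p.2.erase v) := if_neg h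
    rw [e1]
    unfold tog
    rw [if_pos (by simp)]
    exact Prod.ext (Multiset.erase_cons_head v p.1) (Multiset.cons_erase h2)

lemma tog_ne {v : ℕ} {p : OP} (hnd : p.1.Nodup) : tog v p ≠ p := by
  intro h
  have h1 := mem_tog_self (v := v) hnd
  rw [h] at h1
  tauto

lemma tog_ne_tog {v w : ℕ} {p : OP} (hnd : p.1.Nodup) (hvw : v ≠ w) : tog v p ≠ tog w p := by
  intro h
  have h1 := mem_tog_self (v := v) hnd
  have h2 := mem_tog_ne (v := w) (w := v) (p := p) hvw
  rw [h] at h1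
  rw [h1] at h2
  tauto

lemma tog_valid {v : ℕ} {p : OP} (h : IsOddOverpartition p) (hv : Odd v) :
    IsOddOverpartition (tog v p) := by
  unfold tog; split_ifs with hm
  · exact ⟨h.1.erase v, fun x hx => h.2.1 x (Multiset.mem_of_mem_erase hx),
      fun x hx => by
        rcases Multiset.mem_cons.mp hx with rfl | hx
        · exact hv
        · exact h.2.2 x hx⟩
  · exact ⟨Multiset.nodup_cons.mpr ⟨hm, h.1⟩,
      fun x hx => by
        rcases Multiset.mem_cons.mp hx with rfl | hx
        · exact hv
        · exact h.2.1 x hx,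
      fun x hx => h.2.2 x (Multiset.mem_of_mem_erase hx)⟩

lemma tog_sum {v : ℕ} {p : OP} (hv : v ∈ pts p) :
    (tog v p).1.sum + (tog v p).2.sum = p.1.sum + p.2.sum := by
  rw [← pts_sum, ← pts_sum, pts_tog hv]

lemma tog_comm {v w : ℕ} {p : OP} (hvw : v ≠ w) : tog v (tog w p) = tog w (tog v p) := by
  by_cases hw : w ∈ p.1 <;> by_cases hv : v ∈ p.1
  · have e1 : tog w p = (p.1.erase w, w ::ₘ p.2) := if_pos hw
    have e2 : tog v p = (p.1.erase v, v ::ₘ p.2) := if_pos hv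
    rw [e1, e2]
    unfold tog
    rw [if_pos (show v ∈ p.1.erase w from (Multiset.mem_erase_of_ne hvw).mpr hv),
      if_pos (show w ∈ p.1.erase v from (Multiset.mem_erase_of_ne hvw.symm).mpr hw)]
    exact Prod.ext (Multiset.erase_comm _ _ _) (Multiset.cons_swap _ _ _)
  · have e1 : tog w p = (p.1.erase w, w ::ₘ p.2) := if_pos hw
    have e2 : tog v p = (v ::ₘ p.1, p.2.erase v) := if_neg hv
    rw [e1, e2]
    unfold tog
    rw [if_neg (show v ∉ p.1.erase w from fun hc => hv ((Multiset.mem_erase_of_ne hvw).mp hc)),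
      if_pos (show w ∈ v ::ₘ p.1 from Multiset.mem_cons_of_mem hw)]
    exact Prod.ext (Multiset.erase_cons_tail p.1 hvw).symm
      (Multiset.erase_cons_tail p.2 hvw.symm)
  · have e1 : tog w p = (w ::ₘ p.1, p.2.erase w) := if_neg hw
    have e2 : tog v p = (p.1.erase v, v ::ₘ p.2) := if_pos hv
    rw [e1, e2]
    unfold tog
    rw [if_pos (show v ∈ w ::ₘ p.1 from Multiset.mem_cons_of_mem hv),
      if_neg (show w ∉ p.1.erase v from fun hc => hw ((Multiset.mem_erase_of_ne hvw.symm).mp hc))]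
    exact Prod.ext (Multiset.erase_cons_tail p.1 hvw.symm)
      (Multiset.erase_cons_tail p.2 hvw).symm
  · have e1 : tog w p = (w ::ₘ p.1, p.2.erase w) := if_neg hw
    have e2 : tog v p = (v ::ₘ p.1, p.2.erase v) := if_neg hv
    rw [e1, e2]
    unfold tog
    rw [if_neg (show v ∉ w ::ₘ p.1 by simp [hvw, hv]),
      if_neg (show w ∉ v ::ₘ p.1 by simp [hvw.symm, hw])]
    exact Prod.ext (Multiset.cons_swap _ _ _) (Multiset.erase_comm _ _ _)

/-! ### max and min parts -/

def mxm (m : Multiset ℕ) : ℕ := m.sup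
noncomputable def mnm (m : Multiset ℕ) : ℕ := sInf {a | a ∈ m}

lemma sup_mem {m : Multiset ℕ} (h : m ≠ 0) : m.sup ∈ m := by
  induction m using Multiset.induction with
  | empty => simp at h
  | cons a t ih =>
    rw [Multiset.sup_cons]
    rcases eq_or_ne t 0 with rfl | ht
    · simp
    · rcases le_total a t.sup with h1 | h1
      · rw [sup_eq_right.mpr h1]; exact Multiset.mem_cons_of_mem (ih ht)
      · rw [sup_eq_left.mpr h1]; exact Multiset.mem_cons_self a t

lemma mxm_mem {m : Multiset ℕ} (h : m ≠ 0) : mxm m ∈ m := sup_mem h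

lemma le_mxm {m : Multiset ℕ} {a : ℕ} (h : a ∈ m) : a ≤ mxm m := Multiset.le_sup h

lemma mnm_mem {m : Multiset ℕ} (h : m ≠ 0) : mnm m ∈ m := by
  obtain ⟨a, ha⟩ := Multiset.exists_mem_of_ne_zero h
  have hne : {b : ℕ | b ∈ m}.Nonempty := ⟨a, ha⟩
  simpa [mnm] using Nat.sInf_mem hne

lemma mnm_le {m : Multiset ℕ} {a : ℕ} (h : a ∈ m) : mnm m ≤ a := Nat.sInf_le h

lemma mxm_eq {m : Multiset ℕ} {t : ℕ} (hmem : t ∈ m) (hub : ∀ a ∈ m, a ≤ t) : mxm m = t :=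
  le_antisymm (Multiset.sup_le.mpr hub) (Multiset.le_sup hmem)

lemma mnm_eq {m : Multiset ℕ} {t : ℕ} (hmem : t ∈ m) (hlb : ∀ a ∈ m, t ≤ a) : mnm m = t := by
  refine le_antisymm (Nat.sInf_le hmem) (hlb _ ?_)
  have hne : {b : ℕ | b ∈ m}.Nonempty := ⟨t, hmem⟩
  simpa [mnm] using Nat.sInf_mem hne

lemma mxm_replicate {j t : ℕ} (hj : j ≠ 0) : mxm (Multiset.replicate j t) = t :=
  mxm_eq (Multiset.mem_replicate.mpr ⟨hj, rfl⟩)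
    (fun a ha => le_of_eq (Multiset.eq_of_mem_replicate ha))

lemma mnm_replicate {j t : ℕ} (hj : j ≠ 0) : mnm (Multiset.replicate j t) = t :=
  mnm_eq (Multiset.mem_replicate.mpr ⟨hj, rfl⟩)
    (fun a ha => ge_of_eq (Multiset.eq_of_mem_replicate ha))

/-! ### the triple-level structure -/

def Good (N : ℕ) (x : TT) : Prop :=
  (∀ i, IsOddOverpartition (x i)) ∧ (∑ i, ((x i).1.sum + (x i).2.sum)) = N

def i0 (x : TT) : Fin 3 := if pts (x 0) = 0 then (if pts (x 1) = 0 then 2 else 1) else 0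
def j0 (x : TT) : Fin 3 := if pts (x 2) = 0 then (if pts (x 1) = 0 then 0 else 1) else 2

lemma i0_congr {x y : TT} (h : ∀ i, pts (x i) = pts (y i)) : i0 x = i0 y := by
  simp only [i0, h 0, h 1]

lemma j0_congr {x y : TT} (h : ∀ i, pts (x i) = pts (y i)) : j0 x = j0 y := by
  simp only [j0, h 2, h 1]

lemma pts_i0 {x : TT} (h : ∃ i, pts (x i) ≠ 0) : pts (x (i0 x)) ≠ 0 := by
  obtain ⟨i, hi⟩ := h
  unfold i0
  split_ifs with h0 h1
  · fin_cases i <;> simp_all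
  · exact h1
  · exact h0

lemma pts_j0 {x : TT} (h : ∃ i, pts (x i) ≠ 0) : pts (x (j0 x)) ≠ 0 := by
  obtain ⟨i, hi⟩ := h
  unfold j0
  split_ifs with h0 h1
  · fin_cases i <;> simp_all
  · exact h1
  · exact h0

lemma only_i0 {x : TT} (hij : i0 x = j0 x) : ∀ k, k ≠ i0 x → pts (x k) = 0 := by
  intro k hk
  by_cases h0 : pts (x 0) = 0 <;> by_cases h1 : pts (x 1) = 0 <;>
    by_cases h2 : pts (x 2) = 0 <;>
    simp only [i0, j0, h0, h1, h2, if_true, if_false, ite_true, ite_false] at hij hk ⊢ <;>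
    first
      | (exact absurd hij (by decide))
      | (fin_cases k <;> simp_all)

lemma i0_eq {x : TT} {i : Fin 3} (hi : pts (x i) ≠ 0) (h : ∀ k, k ≠ i → pts (x k) = 0) :
    i0 x = i ∧ j0 x = i := by
  fin_cases i
  · have e1 := h 1 (by decide)
    have e2 := h 2 (by decide)
    constructor <;> simp_all [i0, j0]
  · have e1 := h 0 (by decide)
    have e2 := h 2 (by decide)
    constructor <;> simp_all [i0, j0]
  · have e1 := h 0 (by decide)
    have e2 := h 1 (by decide)
    constructor <;> simp_all [i0, j0]

lemma good_sum_pts {N : ℕ} {x : TT} (hx : Good N x) : ∑ i, (pts (x i)).sum = N := by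
  simp only [pts_sum]; exact hx.2

lemma good_exists {N : ℕ} {x : TT} (hx : Good N x) (hN : N ≠ 0) : ∃ i, pts (x i) ≠ 0 := by
  by_contra h
  push_neg at h
  have h0 : ∑ i, (pts (x i)).sum = 0 := by
    apply Finset.sum_eq_zero; intro i _; rw [h i]; rfl
  rw [good_sum_pts hx] at h0
  exact hN h0

lemma update_good {N : ℕ} {x : TT} (hx : Good N x) {i : Fin 3} {c : OP}
    (hc : IsOddOverpartition c) (hsum : c.1.sum + c.2.sum = (x i).1.sum + (x i).2.sum) :
    Good N (Function.update x i c) := by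
  constructor
  · intro k
    by_cases hk : k = i
    · subst hk; rw [Function.update_self]; exact hc
    · rw [Function.update_of_ne hk]; exact hx.1 k
  · have hfe : (fun k => ((Function.update x i c) k).1.sum + ((Function.update x i c) k).2.sum)
        = Function.update (fun k => (x k).1.sum + (x k).2.sum) i (c.1.sum + c.2.sum) := by
      funext k
      by_cases hk : k = i
      · subst hk; rw [Function.update_self, Function.update_self]
      · rw [Function.update_of_ne hk, Function.update_of_ne hk]
    show (∑ k, (((Function.update x i c) k).1.sum + ((Function.update x i c) k).2.sum)) = N
    calc ∑ k, (((Function.update x i c) k).1.sum + ((Function.update x i c) k).2.sum)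
        = ∑ k, Function.update (fun k => (x k).1.sum + (x k).2.sum) i (c.1.sum + c.2.sum) k := by
          rw [hfe]
      _ = (c.1.sum + c.2.sum) + ∑ k ∈ Finset.univ \ {i}, ((x k).1.sum + (x k).2.sum) := by
          rw [Finset.sum_update_of_mem (Finset.mem_univ i)]
      _ = ((x i).1.sum + (x i).2.sum) + ∑ k ∈ Finset.univ \ {i}, ((x k).1.sum + (x k).2.sum) := by
          rw [hsum]
      _ = ∑ k, ((x k).1.sum + (x k).2.sum) := by
          rw [← Finset.sum_update_of_mem (Finset.mem_univ i), Function.update_eq_self]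
      _ = N := hx.2

/-! ### Replicate helpers -/

lemma repl_cons {j t : ℕ} (hj : 0 < j) :
    t ::ₘ Multiset.replicate (j - 1) t = Multiset.replicate j t := by
  obtain ⟨j', rfl⟩ : ∃ j', j = j' + 1 := ⟨j - 1, by omega⟩
  simp [Multiset.replicate_succ]

lemma repl_erase {j t : ℕ} (hj : 0 < j) :
    (Multiset.replicate j t).erase t = Multiset.replicate (j - 1) t := by
  obtain ⟨j', rfl⟩ : ∃ j', j = j' + 1 := ⟨j - 1, by omega⟩
  simp [Multiset.replicate_succ, Multiset.erase_cons_head]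

lemma pts_bar {j t : ℕ} (hj : 0 < j) :
    pts ({t}, Multiset.replicate (j - 1) t) = Multiset.replicate j t := by
  show {t} + Multiset.replicate (j - 1) t = _
  rw [Multiset.singleton_add, repl_cons hj]

lemma pts_nob {j t : ℕ} : pts (0, Multiset.replicate j t) = Multiset.replicate j t := by
  show 0 + Multiset.replicate j t = _
  rw [zero_add]

lemma bar_valid {k t : ℕ} (ht : Odd t) :
    IsOddOverpartition ({t}, Multiset.replicate k t) :=
  ⟨Multiset.nodup_singleton t,
    fun b hb => (Multiset.mem_singleton.mp hb) ▸ ht,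
    fun b hb => (Multiset.eq_of_mem_replicate hb) ▸ ht⟩

lemma nob_valid {k t : ℕ} (ht : Odd t) :
    IsOddOverpartition ((0 : Multiset ℕ), Multiset.replicate k t) :=
  ⟨Multiset.nodup_zero, fun b hb => absurd hb (Multiset.notMem_zero b),
    fun b hb => (Multiset.eq_of_mem_replicate hb) ▸ ht⟩

lemma bar_sum {j t : ℕ} (hj : 0 < j) :
    ({t} : Multiset ℕ).sum + (Multiset.replicate (j - 1) t).sum = t * j := by
  rw [Multiset.sum_singleton, Multiset.sum_replicate, smul_eq_mul]
  obtain ⟨j', rfl⟩ : ∃ j', j = j' + 1 := ⟨j - 1, by omega⟩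
  simp
  ring

lemma nob_sum {j t : ℕ} :
    (0 : Multiset ℕ).sum + (Multiset.replicate j t).sum = t * j := by
  rw [Multiset.sum_zero, Multiset.sum_replicate, smul_eq_mul, zero_add, mul_comm]

/-! ### The two involutions -/

def sig (x : TT) : TT :=
  Function.update x (i0 x) (tog (mxm (pts (x (i0 x)))) (x (i0 x)))

noncomputable def rho (N : ℕ) (x : TT) : TT :=
  Function.update x (i0 x)
    (if (x (i0 x)).1 = 0 then
      (0, Multiset.replicate (N / (N / 2 ^ (N.factorization 2) / mxm (pts (x (i0 x)))))
        (N / 2 ^ (N.factorization 2) / mxm (pts (x (i0 x)))))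
     else ({N / 2 ^ (N.factorization 2) / mxm (pts (x (i0 x)))},
        Multiset.replicate (N / (N / 2 ^ (N.factorization 2) / mxm (pts (x (i0 x)))) - 1)
          (N / 2 ^ (N.factorization 2) / mxm (pts (x (i0 x))))))

noncomputable def tmid (x : TT) : TT :=
  Function.update x (i0 x) (tog (mnm (pts (x (i0 x)))) (x (i0 x)))

def tend (x : TT) : TT :=
  Function.update x (j0 x) (tog (mxm (pts (x (j0 x)))) (x (j0 x)))

noncomputable def tau (N : ℕ) (x : TT) : TT :=
  if i0 x = j0 x then
    if mnm (pts (x (i0 x))) = mxm (pts (x (i0 x))) then rho N x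
    else tmid x
  else tend x

section main
variable {N : ℕ} {x : TT}

/-! ### Lemmas about `sig` -/

lemma sig_apply_i0 : sig x (i0 x) = tog (mxm (pts (x (i0 x)))) (x (i0 x)) :=
  Function.update_self _ _ _

lemma sig_apply_ne {k : Fin 3} (hk : k ≠ i0 x) : sig x k = x k :=
  Function.update_of_ne hk _ _

lemma mxm_odd (hx : Good N x) {i : Fin 3} (hp : pts (x i) ≠ 0) : Odd (mxm (pts (x i))) := by
  rcases mem_pts.mp (mxm_mem hp) with h | h
  · exact (hx.1 i).2.1 _ h
  · exact (hx.1 i).2.2 _ h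

lemma mnm_odd (hx : Good N x) {i : Fin 3} (hp : pts (x i) ≠ 0) : Odd (mnm (pts (x i))) := by
  rcases mem_pts.mp (mnm_mem hp) with h | h
  · exact (hx.1 i).2.1 _ h
  · exact (hx.1 i).2.2 _ h

lemma update_tog_pts {v : ℕ} {i : Fin 3} (hv : v ∈ pts (x i)) :
    ∀ k, pts (Function.update x i (tog v (x i)) k) = pts (x k) := by
  intro k
  by_cases hk : k = i
  · subst hk; rw [Function.update_self]; exact pts_tog hv
  · rw [Function.update_of_ne hk]

lemma sig_pts (hx : Good N x) (hN : N ≠ 0) : ∀ k, pts (sig x k) = pts (x k) :=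
  update_tog_pts (mxm_mem (pts_i0 (good_exists hx hN)))

lemma sig_good (hx : Good N x) (hN : N ≠ 0) : Good N (sig x) := by
  have hp := pts_i0 (good_exists hx hN)
  exact update_good hx (tog_valid (hx.1 (i0 x)) (mxm_odd hx hp)) (tog_sum (mxm_mem hp))

lemma sig_sig (hx : Good N x) (hN : N ≠ 0) : sig (sig x) = x := by
  have hp := pts_i0 (good_exists hx hN)
  have hmem := mxm_mem hp
  have h1 : i0 (sig x) = i0 x := i0_congr (sig_pts hx hN)
  show Function.update (sig x) (i0 (sig x))
    (tog (mxm (pts (sig x (i0 (sig x))))) (sig x (i0 (sig x)))) = x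
  rw [h1, sig_apply_i0, pts_tog hmem, tog_tog (hx.1 (i0 x)).1 hmem]
  show Function.update (Function.update x (i0 x) _) (i0 x) (x (i0 x)) = x
  rw [Function.update_idem, Function.update_eq_self]

lemma sig_ne (hx : Good N x) : sig x ≠ x := by
  intro h
  have h1 := congrFun h (i0 x)
  rw [sig_apply_i0] at h1
  exact tog_ne (hx.1 (i0 x)).1 h1

/-! ### Arithmetic of the divisor pairing -/

lemma arith {N t j : ℕ} (hm4 : N / 2 ^ (N.factorization 2) % 4 = 3)
    (ht : Odd t) (hj : 0 < j) (htj : t * j = N) :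
    Odd (N / 2 ^ (N.factorization 2) / t) ∧
    0 < N / (N / 2 ^ (N.factorization 2) / t) ∧
    (N / 2 ^ (N.factorization 2) / t) * (N / (N / 2 ^ (N.factorization 2) / t)) = N ∧
    t ≠ N / 2 ^ (N.factorization 2) / t ∧
    N / 2 ^ (N.factorization 2) / (N / 2 ^ (N.factorization 2) / t) = t ∧
    N / t = j := by
  have hN : N ≠ 0 := by rintro rfl; rw [Nat.zero_div] at hm4; omega
  set a := 2 ^ (N.factorization 2) with ha
  set m := N / a with hmdef
  have hmaN : a * m = N := Nat.ordProj_mul_ordCompl_eq_self N 2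
  have hm0 : m ≠ 0 := by omega
  have hmodd : m % 2 = 1 := by omega
  have htpos : 0 < t := ht.pos
  have htN : t ∣ N := ⟨j, htj.symm⟩
  have htm : t ∣ m := by
    have hc : t.Coprime a := Nat.Coprime.pow_right _ (Nat.coprime_two_right.mpr ht)
    exact hc.dvd_of_dvd_mul_left (hmaN ▸ htN)
  set t' := m / t with ht'def
  have ht'm : t' ∣ m := Nat.div_dvd_of_dvd htm
  have ht'pos : 0 < t' := Nat.div_pos (Nat.le_of_dvd (Nat.pos_of_ne_zero hm0) htm) htpos
  have ht'odd : Odd t' := by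
    obtain ⟨c, hc⟩ := ht'm
    exact (Nat.odd_mul.mp (hc ▸ Nat.odd_iff.mpr hmodd)).1
  have hmN : m ∣ N := ⟨a, by rw [← hmaN]; ring⟩
  have ht'N : t' ∣ N := ht'm.trans hmN
  have hj'pos : 0 < N / t' := Nat.div_pos (Nat.le_of_dvd (Nat.pos_of_ne_zero hN) ht'N) ht'pos
  have ht'j' : t' * (N / t') = N := Nat.mul_div_cancel' ht'N
  have hback : m / t' = t := Nat.div_div_self htm hm0
  have hNtj : N / t = j := by rw [← htj, mul_comm]; exact Nat.mul_div_cancel j htpos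
  have htt' : t ≠ t' := by
    intro h
    have hsq : t * t' = m := Nat.mul_div_cancel' htm
    rw [← h] at hsq
    obtain ⟨k, hk⟩ := ht
    have hm1 : m = 4 * (k * k + k) + 1 := by rw [← hsq, hk]; ring
    omega
  exact ⟨ht'odd, hj'pos, ht'j', htt', hback, hNtj⟩

/-! ### Structure of elements where `tau` takes the `rho` branch -/

lemma z_rep (hx : Good N x) (hN : N ≠ 0) (hij : i0 x = j0 x)
    (hz : mnm (pts (x (i0 x))) = mxm (pts (x (i0 x)))) :
    ∃ t j, Odd t ∧ 0 < j ∧ t * j = N ∧ mxm (pts (x (i0 x))) = t ∧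
      (x (i0 x) = ({t}, Multiset.replicate (j - 1) t) ∨
        x (i0 x) = (0, Multiset.replicate j t)) ∧
      ∀ k, k ≠ i0 x → x k = (0, 0) := by
  have hex := good_exists hx hN
  have hp : pts (x (i0 x)) ≠ 0 := pts_i0 hex
  have hzero : ∀ k, k ≠ i0 x → x k = (0, 0) := fun k hk => pts_eq_zero (only_i0 hij k hk)
  set i := i0 x with hidef
  set t := mxm (pts (x i)) with htdef
  have htmem : t ∈ pts (x i) := mxm_mem hp
  have hall : ∀ a ∈ pts (x i), a = t := fun a ha =>
    le_antisymm (le_mxm ha) (by rw [← hz]; exact mnm_le ha)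
  set j := Multiset.card (pts (x i)) with hjdef
  have hrep : pts (x i) = Multiset.replicate j t := Multiset.eq_replicate_card.mpr hall
  have hjpos : 0 < j := Multiset.card_pos.mpr hp
  have hodd : Odd t := mxm_odd hx hp
  have hsum : (pts (x i)).sum = N := by
    have h1 := good_sum_pts hx
    rwa [Finset.sum_eq_single_of_mem i (Finset.mem_univ i)
      (fun k _ hk => by rw [only_i0 hij k hk]; rfl)] at h1
  have htj : t * j = N := by
    rw [hrep, Multiset.sum_replicate, smul_eq_mul] at hsum
    rw [mul_comm]; exact hsum
  refine ⟨t, j, hodd, hjpos, htj, rfl, ?_, hzero⟩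
  by_cases hS : (x i).1 = 0
  · right
    refine Prod.ext hS ?_
    have h2 : pts (x i) = (x i).2 := by rw [pts, hS, zero_add]
    rw [← h2, hrep]
  · left
    obtain ⟨a, haS⟩ := Multiset.exists_mem_of_ne_zero hS
    have hat : a = t := hall a (mem_pts.mpr (Or.inl haS))
    have htS : t ∈ (x i).1 := hat ▸ haS
    have hallS : ∀ b ∈ (x i).1, b = t := fun b hb => hall b (mem_pts.mpr (Or.inl hb))
    have hrepS := Multiset.eq_replicate_card.mpr hallS
    have hnd := (hx.1 i).1
    have hcard1 : Multiset.card (x i).1 = 1 := by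
      have hge : 0 < Multiset.card (x i).1 := Multiset.card_pos.mpr hS
      have hle : (x i).1.count t ≤ 1 := Multiset.nodup_iff_count_le_one.mp hnd t
      have hcnt : (x i).1.count t = Multiset.card (x i).1 := by
        conv_lhs => rw [hrepS]
        simp [Multiset.count_replicate]
      omega
    have hS1 : (x i).1 = {t} := by
      rw [hrepS, hcard1, Multiset.replicate_one]
    refine Prod.ext hS1 ?_
    have h2 : t ::ₘ (x i).2 = Multiset.replicate j t := by
      rw [← hrep]
      show _ = (x i).1 + (x i).2
      rw [hS1, Multiset.singleton_add]
    rw [← repl_cons hjpos] at h2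
    exact (Multiset.cons_inj_right t).mp h2


lemma repl_ne_zero {j t : ℕ} (hj : j ≠ 0) : Multiset.replicate j t ≠ 0 := by
  intro hc
  have := congrArg Multiset.card hc
  simp at this
  exact hj this

lemma tog_bar {j t : ℕ} (hj : 0 < j) :
    tog t ({t}, Multiset.replicate (j - 1) t) = (0, Multiset.replicate j t) := by
  unfold tog
  rw [if_pos (Multiset.mem_singleton_self t)]
  exact Prod.ext (Multiset.erase_singleton t) (repl_cons hj)

lemma tog_nob {j t : ℕ} (hj : 0 < j) :
    tog t ((0 : Multiset ℕ), Multiset.replicate j t) = ({t}, Multiset.replicate (j - 1) t) := by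
  unfold tog
  rw [if_neg (Multiset.notMem_zero t)]
  exact Prod.ext rfl (repl_erase hj)

lemma rho_eq (N : ℕ) (y : TT) {c : ℕ} (hm : mxm (pts (y (i0 y))) = c) :
    rho N y = Function.update y (i0 y)
      (if (y (i0 y)).1 = 0 then
        (0, Multiset.replicate (N / (N / 2 ^ (N.factorization 2) / c))
          (N / 2 ^ (N.factorization 2) / c))
       else ({N / 2 ^ (N.factorization 2) / c},
          Multiset.replicate (N / (N / 2 ^ (N.factorization 2) / c) - 1)
            (N / 2 ^ (N.factorization 2) / c))) := by
  unfold rho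
  rw [hm]

lemma sig_eq (x : TT) {c : ℕ} (hm : mxm (pts (x (i0 x))) = c) :
    sig x = Function.update x (i0 x) (tog c (x (i0 x))) := by
  unfold sig
  rw [hm]

/-- Master lemma for elements in the `rho` branch. -/
lemma z_main (hx : Good N x) (hN : N ≠ 0)
    (hm4 : N / 2 ^ (N.factorization 2) % 4 = 3)
    (hij : i0 x = j0 x) (hz : mnm (pts (x (i0 x))) = mxm (pts (x (i0 x)))) :
    rho N (rho N x) = x ∧ Good N (rho N x) ∧ rho N x ≠ x ∧
    (i0 (rho N x) = i0 x ∧ j0 (rho N x) = i0 x ∧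
      mnm (pts (rho N x (i0 (rho N x)))) = mxm (pts (rho N x (i0 (rho N x))))) ∧
    sig (rho N x) = rho N (sig x) ∧ rho N x ≠ sig x := by
  obtain ⟨t, j, hodd, hjpos, htj, hmx, hcase, hzero⟩ := z_rep hx hN hij hz
  obtain ⟨ht'odd, hj'pos, ht'j', htt', hback, hNtj⟩ := arith hm4 hodd hjpos htj
  obtain ⟨t', ht'⟩ : ∃ t', N / 2 ^ (N.factorization 2) / t = t' := ⟨_, rfl⟩
  obtain ⟨j', hj'⟩ : ∃ j', N / t' = j' := ⟨_, rfl⟩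
  rw [ht'] at ht'odd htt' hback
  rw [ht', hj'] at hj'pos ht'j'
  have hj'0 : j' ≠ 0 := by omega
  have hj0 : j ≠ 0 := by omega
  have hrx0 := rho_eq N x hmx
  rw [ht', hj'] at hrx0
  have hxisum : (x (i0 x)).1.sum + (x (i0 x)).2.sum = t * j := by
    rcases hcase with hc | hc <;> rw [hc]
    · exact bar_sum hjpos
    · exact nob_sum
  rcases hcase with hbar | hnob
  · -- barred case : x (i0 x) = ({t}, replicate (j-1) t)
    have hcond : ¬((x (i0 x)).1 = 0) := by rw [hbar]; simp
    have hrho : rho N x = Function.update x (i0 x)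
        ({t'}, Multiset.replicate (j' - 1) t') := by
      rw [hrx0, if_neg hcond]
    have hyi : rho N x (i0 x) = ({t'}, Multiset.replicate (j' - 1) t') := by
      rw [hrho]; exact Function.update_self _ _ _
    have hyk : ∀ k, k ≠ i0 x → rho N x k = x k := by
      intro k hk; rw [hrho]; exact Function.update_of_ne hk _ _
    have hyptsk : ∀ k, k ≠ i0 x → pts (rho N x k) = 0 := by
      intro k hk; rw [hyk k hk, hzero k hk]; rfl
    have hypts : pts (rho N x (i0 x)) = Multiset.replicate j' t' := by
      rw [hyi]; exact pts_bar hj'pos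
    have hypts0 : pts (rho N x (i0 x)) ≠ 0 := by rw [hypts]; exact repl_ne_zero hj'0
    have hy_ij := i0_eq hypts0 hyptsk
    have hymx : mxm (pts (rho N x (i0 (rho N x)))) = t' := by
      rw [hy_ij.1, hypts]; exact mxm_replicate hj'0
    have hymn : mnm (pts (rho N x (i0 (rho N x)))) = t' := by
      rw [hy_ij.1, hypts]; exact mnm_replicate hj'0
    -- rho ∘ rho = id
    have hA : rho N (rho N x) = x := by
      rw [rho_eq N (rho N x) hymx, hy_ij.1, hyi,
        if_neg (show ¬((({t'} : Multiset ℕ), Multiset.replicate (j' - 1) t').1 = 0) by simp),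
        hback, hNtj, ← hbar, hrho, Function.update_idem, Function.update_eq_self]
    have hB : Good N (rho N x) := by
      rw [hrho]
      refine update_good hx (bar_valid ht'odd) ?_
      show ({t'} : Multiset ℕ).sum + (Multiset.replicate (j' - 1) t').sum = _
      rw [bar_sum hj'pos, hxisum]
      omega
    have hC : rho N x ≠ x := by
      intro h
      have h1 := congrFun h (i0 x)
      rw [hyi, hbar] at h1
      exact htt' (Multiset.singleton_inj.mp (congrArg Prod.fst h1)).symm
    -- sig of x
    have hsx : sig x = Function.update x (i0 x) (0, Multiset.replicate j t) := by
      rw [sig_eq x hmx, hbar, tog_bar hjpos]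
    have hsxi : sig x (i0 x) = (0, Multiset.replicate j t) := by
      rw [hsx]; exact Function.update_self _ _ _
    have hsxk : ∀ k, k ≠ i0 x → pts (sig x k) = 0 := by
      intro k hk
      rw [hsx, Function.update_of_ne hk, hzero k hk]; rfl
    have hsxpts : pts (sig x (i0 x)) = Multiset.replicate j t := by rw [hsxi]; exact pts_nob
    have hsxpts0 : pts (sig x (i0 x)) ≠ 0 := by rw [hsxpts]; exact repl_ne_zero hj0
    have hsx_ij := i0_eq hsxpts0 hsxk
    have hsxmx : mxm (pts (sig x (i0 (sig x)))) = t := by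
      rw [hsx_ij.1, hsxpts]; exact mxm_replicate hj0
    have hE : sig (rho N x) = rho N (sig x) := by
      rw [sig_eq (rho N x) hymx, hy_ij.1, hyi, tog_bar hj'pos, hrho, Function.update_idem]
      rw [rho_eq N (sig x) hsxmx, hsx_ij.1, hsxi,
        if_pos (show (((0 : Multiset ℕ), Multiset.replicate j t) : OP).1 = 0 from rfl),
        ht', hj', hsx, Function.update_idem]
    have hF : rho N x ≠ sig x := by
      intro h
      have h1 := congrFun h (i0 x)
      rw [hyi, hsxi] at h1
      have h2 := congrArg Prod.fst h1
      simp at h2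
    exact ⟨hA, hB, hC, ⟨hy_ij.1, hy_ij.2, hymn.trans hymx.symm⟩, hE, hF⟩
  · -- non-barred case : x (i0 x) = (0, replicate j t)
    have hcond : ((x (i0 x)).1 = 0) := by rw [hnob]
    have hrho : rho N x = Function.update x (i0 x)
        (0, Multiset.replicate j' t') := by
      rw [hrx0, if_pos hcond]
    have hyi : rho N x (i0 x) = (0, Multiset.replicate j' t') := by
      rw [hrho]; exact Function.update_self _ _ _
    have hyk : ∀ k, k ≠ i0 x → rho N x k = x k := by
      intro k hk; rw [hrho]; exact Function.update_of_ne hk _ _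
    have hyptsk : ∀ k, k ≠ i0 x → pts (rho N x k) = 0 := by
      intro k hk; rw [hyk k hk, hzero k hk]; rfl
    have hypts : pts (rho N x (i0 x)) = Multiset.replicate j' t' := by
      rw [hyi]; exact pts_nob
    have hypts0 : pts (rho N x (i0 x)) ≠ 0 := by rw [hypts]; exact repl_ne_zero hj'0
    have hy_ij := i0_eq hypts0 hyptsk
    have hymx : mxm (pts (rho N x (i0 (rho N x)))) = t' := by
      rw [hy_ij.1, hypts]; exact mxm_replicate hj'0
    have hymn : mnm (pts (rho N x (i0 (rho N x)))) = t' := by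
      rw [hy_ij.1, hypts]; exact mnm_replicate hj'0
    have hA : rho N (rho N x) = x := by
      rw [rho_eq N (rho N x) hymx, hy_ij.1, hyi,
        if_pos (show (((0 : Multiset ℕ), Multiset.replicate j' t') : OP).1 = 0 from rfl),
        hback, hNtj, ← hnob, hrho, Function.update_idem, Function.update_eq_self]
    have hB : Good N (rho N x) := by
      rw [hrho]
      refine update_good hx (nob_valid ht'odd) ?_
      show (0 : Multiset ℕ).sum + (Multiset.replicate j' t').sum = _
      rw [nob_sum, hxisum]
      omega
    have hC : rho N x ≠ x := by
      intro h
      have h1 := congrFun h (i0 x)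
      rw [hyi, hnob] at h1
      have h2 := congrArg Prod.snd h1
      simp only at h2
      have h3 := congrArg (Multiset.count t') h2
      rw [Multiset.count_replicate, Multiset.count_replicate] at h3
      rw [if_pos rfl, if_neg (fun hc => htt' hc)] at h3
      exact hj'0 h3
    have hsx : sig x = Function.update x (i0 x) ({t}, Multiset.replicate (j - 1) t) := by
      rw [sig_eq x hmx, hnob, tog_nob hjpos]
    have hsxi : sig x (i0 x) = ({t}, Multiset.replicate (j - 1) t) := by
      rw [hsx]; exact Function.update_self _ _ _
    have hsxk : ∀ k, k ≠ i0 x → pts (sig x k) = 0 := by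
      intro k hk
      rw [hsx, Function.update_of_ne hk, hzero k hk]; rfl
    have hsxpts : pts (sig x (i0 x)) = Multiset.replicate j t := by
      rw [hsxi]; exact pts_bar hjpos
    have hsxpts0 : pts (sig x (i0 x)) ≠ 0 := by rw [hsxpts]; exact repl_ne_zero hj0
    have hsx_ij := i0_eq hsxpts0 hsxk
    have hsxmx : mxm (pts (sig x (i0 (sig x)))) = t := by
      rw [hsx_ij.1, hsxpts]; exact mxm_replicate hj0
    have hE : sig (rho N x) = rho N (sig x) := by
      rw [sig_eq (rho N x) hymx, hy_ij.1, hyi, tog_nob hj'pos, hrho, Function.update_idem]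
      rw [rho_eq N (sig x) hsxmx, hsx_ij.1, hsxi,
        if_neg (show ¬((({t} : Multiset ℕ), Multiset.replicate (j - 1) t).1 = 0) by simp),
        ht', hj', hsx, Function.update_idem]
    have hF : rho N x ≠ sig x := by
      intro h
      have h1 := congrFun h (i0 x)
      rw [hyi, hsxi] at h1
      have h2 := congrArg Prod.fst h1
      simp at h2
    exact ⟨hA, hB, hC, ⟨hy_ij.1, hy_ij.2, hymn.trans hymx.symm⟩, hE, hF⟩


/-! ### Lemmas about `tmid` and `tend` -/

lemma tmid_pts (hx : Good N x) (hN : N ≠ 0) : ∀ k, pts (tmid x k) = pts (x k) :=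
  update_tog_pts (mnm_mem (pts_i0 (good_exists hx hN)))

lemma tend_pts (hx : Good N x) (hN : N ≠ 0) : ∀ k, pts (tend x k) = pts (x k) := by
  intro k
  unfold tend
  by_cases hk : k = j0 x
  · subst hk; rw [Function.update_self]
    exact pts_tog (mxm_mem (pts_j0 (good_exists hx hN)))
  · rw [Function.update_of_ne hk]

lemma tmid_good (hx : Good N x) (hN : N ≠ 0) : Good N (tmid x) := by
  have hp := pts_i0 (good_exists hx hN)
  exact update_good hx (tog_valid (hx.1 (i0 x)) (mnm_odd hx hp)) (tog_sum (mnm_mem hp))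

lemma tend_good (hx : Good N x) (hN : N ≠ 0) : Good N (tend x) := by
  have hp := pts_j0 (good_exists hx hN)
  exact update_good hx (tog_valid (hx.1 (j0 x)) (mxm_odd hx hp)) (tog_sum (mxm_mem hp))

lemma tmid_apply_i0 : tmid x (i0 x) = tog (mnm (pts (x (i0 x)))) (x (i0 x)) :=
  Function.update_self _ _ _

lemma tend_apply_j0 : tend x (j0 x) = tog (mxm (pts (x (j0 x)))) (x (j0 x)) :=
  Function.update_self _ _ _

lemma tmid_tmid (hx : Good N x) (hN : N ≠ 0) : tmid (tmid x) = x := by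
  have hp := pts_i0 (good_exists hx hN)
  have hmem := mnm_mem hp
  have h1 : i0 (tmid x) = i0 x := i0_congr (tmid_pts hx hN)
  show Function.update (tmid x) (i0 (tmid x))
    (tog (mnm (pts (tmid x (i0 (tmid x))))) (tmid x (i0 (tmid x)))) = x
  rw [h1, tmid_apply_i0, pts_tog hmem, tog_tog (hx.1 (i0 x)).1 hmem]
  show Function.update (Function.update x (i0 x) _) (i0 x) (x (i0 x)) = x
  rw [Function.update_idem, Function.update_eq_self]

lemma tend_tend (hx : Good N x) (hN : N ≠ 0) : tend (tend x) = x := by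
  have hp := pts_j0 (good_exists hx hN)
  have hmem := mxm_mem hp
  have h1 : j0 (tend x) = j0 x := j0_congr (tend_pts hx hN)
  show Function.update (tend x) (j0 (tend x))
    (tog (mxm (pts (tend x (j0 (tend x))))) (tend x (j0 (tend x)))) = x
  rw [h1, tend_apply_j0, pts_tog hmem, tog_tog (hx.1 (j0 x)).1 hmem]
  show Function.update (Function.update x (j0 x) _) (j0 x) (x (j0 x)) = x
  rw [Function.update_idem, Function.update_eq_self]

lemma tmid_ne (hx : Good N x) : tmid x ≠ x := by
  intro h
  have h1 := congrFun h (i0 x)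
  rw [tmid_apply_i0] at h1
  exact tog_ne (hx.1 (i0 x)).1 h1

lemma tend_ne (hx : Good N x) : tend x ≠ x := by
  intro h
  have h1 := congrFun h (j0 x)
  rw [tend_apply_j0] at h1
  exact tog_ne (hx.1 (j0 x)).1 h1

/-! ### The branch lemmas for tau -/

lemma tau_branch_z (hij : i0 x = j0 x) (hz : mnm (pts (x (i0 x))) = mxm (pts (x (i0 x)))) :
    tau N x = rho N x := by
  unfold tau; rw [if_pos hij, if_pos hz]

lemma tau_branch_mid (hij : i0 x = j0 x) (hz : ¬ mnm (pts (x (i0 x))) = mxm (pts (x (i0 x)))) :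
    tau N x = tmid x := by
  unfold tau; rw [if_pos hij, if_neg hz]

lemma tau_branch_end (hij : ¬ i0 x = j0 x) : tau N x = tend x := by
  unfold tau; rw [if_neg hij]

/-! ### The main properties of sig and tau -/

lemma tau_good (hx : Good N x) (hN : N ≠ 0)
    (hm4 : N / 2 ^ (N.factorization 2) % 4 = 3) : Good N (tau N x) := by
  by_cases hij : i0 x = j0 x
  · by_cases hz : mnm (pts (x (i0 x))) = mxm (pts (x (i0 x)))
    · rw [tau_branch_z hij hz]; exact (z_main hx hN hm4 hij hz).2.1
    · rw [tau_branch_mid hij hz]; exact tmid_good hx hN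
  · rw [tau_branch_end hij]; exact tend_good hx hN

lemma tau_tau (hx : Good N x) (hN : N ≠ 0)
    (hm4 : N / 2 ^ (N.factorization 2) % 4 = 3) : tau N (tau N x) = x := by
  by_cases hij : i0 x = j0 x
  · by_cases hz : mnm (pts (x (i0 x))) = mxm (pts (x (i0 x)))
    · obtain ⟨hA, _, _, ⟨hd1, hd2, hd3⟩, _, _⟩ := z_main hx hN hm4 hij hz
      rw [tau_branch_z hij hz, tau_branch_z (hd1.trans hd2.symm) hd3]
      exact hA
    · rw [tau_branch_mid hij hz]
      have hi : i0 (tmid x) = i0 x := i0_congr (tmid_pts hx hN)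
      have hj : j0 (tmid x) = j0 x := j0_congr (tmid_pts hx hN)
      have hij' : i0 (tmid x) = j0 (tmid x) := by rw [hi, hj]; exact hij
      have hz' : ¬ mnm (pts (tmid x (i0 (tmid x)))) = mxm (pts (tmid x (i0 (tmid x)))) := by
        rw [hi, tmid_pts hx hN (i0 x)]; exact hz
      rw [tau_branch_mid hij' hz']
      exact tmid_tmid hx hN
  · rw [tau_branch_end hij]
    have hi : i0 (tend x) = i0 x := i0_congr (tend_pts hx hN)
    have hj : j0 (tend x) = j0 x := j0_congr (tend_pts hx hN)
    have hij' : ¬ i0 (tend x) = j0 (tend x) := by rw [hi, hj]; exact hij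
    rw [tau_branch_end hij']
    exact tend_tend hx hN

lemma sig_tau (hx : Good N x) (hN : N ≠ 0)
    (hm4 : N / 2 ^ (N.factorization 2) % 4 = 3) : sig (tau N x) = tau N (sig x) := by
  have hp := pts_i0 (good_exists hx hN)
  have hsi : i0 (sig x) = i0 x := i0_congr (sig_pts hx hN)
  have hsj : j0 (sig x) = j0 x := j0_congr (sig_pts hx hN)
  by_cases hij : i0 x = j0 x
  · by_cases hz : mnm (pts (x (i0 x))) = mxm (pts (x (i0 x)))
    · obtain ⟨_, _, _, _, hE, _⟩ := z_main hx hN hm4 hij hz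
      have hij' : i0 (sig x) = j0 (sig x) := by rw [hsi, hsj]; exact hij
      have hz' : mnm (pts (sig x (i0 (sig x)))) = mxm (pts (sig x (i0 (sig x)))) := by
        rw [hsi, sig_pts hx hN (i0 x)]; exact hz
      rw [tau_branch_z hij hz, tau_branch_z hij' hz']
      exact hE
    · have hij' : i0 (sig x) = j0 (sig x) := by rw [hsi, hsj]; exact hij
      have hz' : ¬ mnm (pts (sig x (i0 (sig x)))) = mxm (pts (sig x (i0 (sig x)))) := by
        rw [hsi, sig_pts hx hN (i0 x)]; exact hz
      rw [tau_branch_mid hij hz, tau_branch_mid hij' hz']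
      -- sig (tmid x) = tmid (sig x)
      have hti : i0 (tmid x) = i0 x := i0_congr (tmid_pts hx hN)
      have hne : mxm (pts (x (i0 x))) ≠ mnm (pts (x (i0 x))) := fun h => hz h.symm
      show Function.update (tmid x) (i0 (tmid x))
        (tog (mxm (pts (tmid x (i0 (tmid x))))) (tmid x (i0 (tmid x)))) = _
      rw [hti, tmid_apply_i0, pts_tog (mnm_mem hp)]
      show _ = Function.update (sig x) (i0 (sig x))
        (tog (mnm (pts (sig x (i0 (sig x))))) (sig x (i0 (sig x))))
      rw [hsi, sig_apply_i0, pts_tog (mxm_mem hp)]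
      unfold tmid sig
      rw [Function.update_idem, Function.update_idem, tog_comm hne]
  · have hij' : ¬ i0 (sig x) = j0 (sig x) := by rw [hsi, hsj]; exact hij
    rw [tau_branch_end hij, tau_branch_end hij']
    -- sig (tend x) = tend (sig x)
    have hq := pts_j0 (good_exists hx hN)
    have hti : i0 (tend x) = i0 x := i0_congr (tend_pts hx hN)
    have htj : j0 (tend x) = j0 x := j0_congr (tend_pts hx hN)
    show Function.update (tend x) (i0 (tend x))
      (tog (mxm (pts (tend x (i0 (tend x))))) (tend x (i0 (tend x)))) = _
    rw [hti, (show tend x (i0 x) = x (i0 x) from Function.update_of_ne hij _ _)]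
    show _ = Function.update (sig x) (j0 (sig x))
      (tog (mxm (pts (sig x (j0 (sig x)))))  (sig x (j0 (sig x))))
    rw [hsj, (show sig x (j0 x) = x (j0 x) from
      Function.update_of_ne (fun h => hij h.symm) _ _)]
    unfold tend sig
    exact (Function.update_comm hij _ _ _).symm

lemma tau_ne (hx : Good N x) (hN : N ≠ 0)
    (hm4 : N / 2 ^ (N.factorization 2) % 4 = 3) : tau N x ≠ x := by
  by_cases hij : i0 x = j0 x
  · by_cases hz : mnm (pts (x (i0 x))) = mxm (pts (x (i0 x)))
    · rw [tau_branch_z hij hz]; exact (z_main hx hN hm4 hij hz).2.2.1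
    · rw [tau_branch_mid hij hz]; exact tmid_ne hx
  · rw [tau_branch_end hij]; exact tend_ne hx

lemma sig_ne_tau (hx : Good N x) (hN : N ≠ 0)
    (hm4 : N / 2 ^ (N.factorization 2) % 4 = 3) : sig x ≠ tau N x := by
  by_cases hij : i0 x = j0 x
  · by_cases hz : mnm (pts (x (i0 x))) = mxm (pts (x (i0 x)))
    · rw [tau_branch_z hij hz]
      exact fun h => (z_main hx hN hm4 hij hz).2.2.2.2.2 h.symm
    · rw [tau_branch_mid hij hz]
      intro h
      have h1 := congrFun h (i0 x)
      rw [sig_apply_i0, tmid_apply_i0] at h1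
      exact tog_ne_tog (hx.1 (i0 x)).1 (fun hc => hz hc.symm) h1
  · rw [tau_branch_end hij]
    intro h
    have h1 := congrFun h (i0 x)
    rw [sig_apply_i0,
      (show tend x (i0 x) = x (i0 x) from Function.update_of_ne hij _ _)] at h1
    exact tog_ne (hx.1 (i0 x)).1 h1


end main

/-! ### Finiteness -/

lemma card_le_sum' (m : Multiset ℕ) (h : ∀ a ∈ m, 1 ≤ a) : Multiset.card m ≤ m.sum := by
  induction m using Multiset.induction with
  | empty => simp
  | cons a t ih =>
    simp only [Multiset.card_cons, Multiset.sum_cons]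
    have h1 := ih (fun b hb => h b (Multiset.mem_cons_of_mem hb))
    have h2 := h a (Multiset.mem_cons_self a t)
    omega

lemma mult_le_B {N : ℕ} {m : Multiset ℕ} (hodd : ∀ a ∈ m, Odd a) (hsum : m.sum ≤ N) :
    m ≤ (N + 1) • Multiset.range (N + 1) := by
  rw [Multiset.le_iff_count]
  intro a
  by_cases ham : a ∈ m
  · have ha1 : ∀ b ∈ m, 1 ≤ b := by
      intro b hb
      have := hodd b hb
      rw [Nat.odd_iff] at this
      omega
    have haN : a ≤ N := le_trans (Multiset.le_sum_of_mem ham) hsum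
    have hcm : m.count a ≤ Multiset.card m := Multiset.count_le_card a m
    have hcs : Multiset.card m ≤ m.sum := card_le_sum' m ha1
    have hmem : a ∈ Multiset.range (N + 1) := Multiset.mem_range.mpr (by omega)
    have hc1 : 1 ≤ (Multiset.range (N + 1)).count a := Multiset.one_le_count_iff_mem.mpr hmem
    rw [Multiset.count_nsmul]
    calc m.count a ≤ N := by omega
    _ ≤ (N + 1) * 1 := by omega
    _ ≤ (N + 1) * (Multiset.range (N + 1)).count a := by
        exact Nat.mul_le_mul_left _ hc1
  · rw [Multiset.count_eq_zero_of_notMem ham]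
    omega

lemma good_finite (N : ℕ) : {x : TT | Good N x}.Finite := by
  set B : Multiset ℕ := (N + 1) • Multiset.range (N + 1) with hB
  have hBfin : {m : Multiset ℕ | m ≤ B}.Finite := by
    apply Set.Finite.subset (B.powerset.toFinset : Finset (Multiset ℕ)).finite_toSet
    intro m hm
    simp only [Finset.coe_sort_coe, Finset.mem_coe, Multiset.mem_toFinset,
      Multiset.mem_powerset]
    exact hm
  have hPfin : {p : OP | p.1 ∈ {m : Multiset ℕ | m ≤ B} ∧
      p.2 ∈ {m : Multiset ℕ | m ≤ B}}.Finite := by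
    have := hBfin.prod hBfin
    apply Set.Finite.subset this
    intro p hp
    exact ⟨hp.1, hp.2⟩
  apply Set.Finite.subset (Set.Finite.pi (fun _ : Fin 3 => hPfin))
  intro x hx
  have hgood : Good N x := hx
  rw [Set.mem_pi]
  intro i _
  have hsb : (x i).1.sum + (x i).2.sum ≤ N := by
    have := Finset.single_le_sum
      (f := fun k => (x k).1.sum + (x k).2.sum)
      (fun _ _ => Nat.zero_le _) (Finset.mem_univ i)
    rw [hgood.2] at this
    exact this
  constructor
  · exact mult_le_B (hgood.1 i).2.1 (by omega)
  · exact mult_le_B (hgood.1 i).2.2 (by omega)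

end OPTProof

/-- For all `n ≥ 0` and `α ≥ 0`, `OPT(2^α(4n+3)) ≡ 0 (mod 4)`. -/
theorem opt_triple_mod_four (n α : ℕ) : OPT 3 (2 ^ α * (4 * n + 3)) ≡ 0 [MOD 4] := by
  set N := 2 ^ α * (4 * n + 3) with hNdef
  have hN0 : N ≠ 0 := by positivity
  have hfac : N.factorization 2 = α := by
    rw [hNdef, Nat.factorization_mul (pow_ne_zero α two_ne_zero)
      (by omega : (4 * n + 3) ≠ 0)]
    rw [Finsupp.add_apply, Nat.Prime.factorization_pow Nat.prime_two,
      Finsupp.single_eq_same,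
      Nat.factorization_eq_zero_of_not_dvd (by omega : ¬ 2 ∣ (4 * n + 3))]
    omega
  have hm4 : N / 2 ^ (N.factorization 2) % 4 = 3 := by
    rw [hfac, hNdef, Nat.mul_div_cancel_left _ (pow_pos two_pos α)]
    omega
  show OPT 3 N ≡ 0 [MOD 4]
  unfold OPT
  rw [Nat.modEq_zero_iff_dvd]
  have hfin : {f : Fin 3 → Multiset ℕ × Multiset ℕ |
      (∀ i, IsOddOverpartition (f i)) ∧ (∑ i, ((f i).1.sum + (f i).2.sum)) = N}.Finite :=
    OPTProof.good_finite N
  rw [Set.ncard_eq_toFinset_card _ hfin]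
  have hmem : ∀ y, y ∈ hfin.toFinset ↔ OPTProof.Good N y := by
    intro y
    rw [Set.Finite.mem_toFinset]
    exact Iff.rfl
  refine OPTProof.four_dvd_card OPTProof.sig (OPTProof.tau N) hfin.toFinset.card
    hfin.toFinset le_rfl ?_ ?_ ?_ ?_ ?_ ?_ ?_ ?_
  · intro y hy; rw [hmem] at hy ⊢; exact OPTProof.sig_good hy hN0
  · intro y hy; rw [hmem] at hy ⊢; exact OPTProof.tau_good hy hN0 hm4
  · intro y hy; rw [hmem] at hy; exact OPTProof.sig_sig hy hN0
  · intro y hy; rw [hmem] at hy; exact OPTProof.tau_tau hy hN0 hm4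
  · intro y hy; rw [hmem] at hy; exact OPTProof.sig_tau hy hN0 hm4
  · intro y hy; rw [hmem] at hy; exact OPTProof.sig_ne hy
  · intro y hy; rw [hmem] at hy; exact OPTProof.tau_ne hy hN0 hm4
  · intro y hy; rw [hmem] at hy; exact OPTProof.sig_ne_tau hy hN0 hm4
end

section
/- Let p ≥ 3 be a prime. Then for all integers n ≥ 0, α ≥ 0, δ ≥ 0, and every t ∈ {1, 2, …, p−1}, the number of overpartition triples with odd parts satisfies OPT(2·3^{2α}·p^{2δ+1}(pn+t) + 3^{2α}·p^{2(δ+1)}) ≡ 0 (mod 4). -/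
open Finset Finset.Nat Nat.Partition

abbrev OddOverpartition (m : ℕ) : Type :=
  {q : Multiset ℕ × Multiset ℕ // IsOddOverpartition q ∧ q.1.sum + q.2.sum = m}

def oddOverpartitionEquiv (m : ℕ) :
    OddOverpartition m ≃ Σ l : odds m, (l.1.parts.toFinset.powerset : Finset (Finset ℕ)) where
  toFun q :=
    have hodd : ∀ x ∈ q.1.1 + q.1.2, Odd x := fun x hx =>
      (Multiset.mem_add.1 hx).elim (q.2.1.2.1 x) (q.2.1.2.2 x)
    ⟨⟨⟨q.1.1 + q.1.2, fun hx => (hodd _ hx).pos, by rw [Multiset.sum_add, q.2.2]⟩,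
      by simpa [odds, restricted] using hodd⟩,
      ⟨q.1.1.toFinset, mem_powerset.2 <|
        Multiset.toFinset_subset.2 (Multiset.subset_of_le (Multiset.le_add_right _ _))⟩⟩
  invFun x :=
    have hodd : ∀ y ∈ x.1.1.parts, Odd y := by simpa [odds, restricted] using x.1.2
    have hle : x.2.1.val ≤ x.1.1.parts := (Multiset.le_iff_subset x.2.1.nodup).2 fun y hy =>
      Multiset.mem_toFinset.1 (mem_powerset.1 x.2.2 hy)
    ⟨(x.2.1.val, x.1.1.parts - x.2.1.val),
      ⟨x.2.1.nodup, fun y hy => hodd y (Multiset.mem_of_le hle hy),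
        fun y hy => hodd y (Multiset.mem_of_le (Multiset.sub_le_self _ _) hy)⟩,
      by rw [← Multiset.sum_add, add_tsub_cancel_of_le hle, x.1.1.parts_sum]⟩
  left_inv q := by
    obtain ⟨⟨D, M⟩, ⟨hD, -, -⟩, -⟩ := q
    ext1
    simp [Multiset.dedup_eq_self.2 hD]
  right_inv x := by
    obtain ⟨⟨l, hl⟩, s, hs⟩ := x
    have hle : s.val ≤ l.parts := (Multiset.le_iff_subset s.nodup).2 fun y hy =>
      Multiset.mem_toFinset.1 (mem_powerset.1 hs hy)
    refine Sigma.subtype_ext (Subtype.ext (Nat.Partition.ext ?_)) (by simp)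
    exact add_tsub_cancel_of_le hle

instance (m : ℕ) : Finite (OddOverpartition m) :=
  .of_equiv _ (oddOverpartitionEquiv m).symm

theorem card_oddOverpartition (m : ℕ) :
    Nat.card (OddOverpartition m) = ∑ l ∈ odds m, 2 ^ #l.parts.toFinset := by
  rw [Nat.card_congr (oddOverpartitionEquiv m), Nat.card_sigma,
    ← sum_coe_sort (odds m)]
  refine sum_congr rfl fun l _ => ?_
  rw [Nat.card_eq_fintype_card, Fintype.card_coe, card_powerset]

def oddOverpartitionTuples (k n : ℕ) : Set (Fin k → Multiset ℕ × Multiset ℕ) :=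
  {f | (∀ i, IsOddOverpartition (f i)) ∧ (∑ i, ((f i).1.sum + (f i).2.sum)) = n}

def tupleSizes {k n : ℕ} (f : oddOverpartitionTuples k n) :
    antidiagonalTuple k n :=
  ⟨fun i => (f.1 i).1.sum + (f.1 i).2.sum, mem_antidiagonalTuple.2 f.2.2⟩

def tupleSizesFiberEquiv {k n : ℕ} (x : antidiagonalTuple k n) :
    {f : oddOverpartitionTuples k n // tupleSizes f = x} ≃ Π i, OddOverpartition (x.1 i) where
  toFun f i := ⟨f.1.1 i, f.1.2.1 i, congrFun (congrArg Subtype.val f.2) i⟩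
  invFun g := ⟨⟨fun i => (g i).1, fun i => (g i).2.1, by
      simpa only [(g _).2.2] using mem_antidiagonalTuple.1 x.2⟩,
    Subtype.ext (funext fun i => (g i).2.2)⟩
  left_inv _ := rfl
  right_inv _ := rfl

theorem OPT_eq_sum_prod (k n : ℕ) :
    OPT k n = ∑ x ∈ antidiagonalTuple k n, ∏ i, Nat.card (OddOverpartition (x i)) := by
  rw [show OPT k n = (oddOverpartitionTuples k n).ncard from rfl, ← Nat.card_coe_set_eq,
    Nat.card_congr ((Equiv.sigmaFiberEquiv tupleSizes).symm.trans
      (Equiv.sigmaCongrRight tupleSizesFiberEquiv)),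
    Nat.card_sigma, ← sum_coe_sort (antidiagonalTuple k n)]
  simp only [Nat.card_pi]

theorem card_oddOverpartition_zero : Nat.card (OddOverpartition 0) = 1 := by
  simp [card_oddOverpartition, odds, restricted]

theorem Nat.Partition.toFinset_parts_nonempty {m : ℕ} (hm : m ≠ 0) (l : m.Partition) :
    l.parts.toFinset.Nonempty := by
  rw [Multiset.toFinset_nonempty]
  rintro h
  exact hm (by rw [← l.parts_sum, h, Multiset.sum_zero])

theorem two_dvd_card_oddOverpartition {m : ℕ} (hm : m ≠ 0) :
    2 ∣ Nat.card (OddOverpartition m) := by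
  rw [card_oddOverpartition]
  exact dvd_sum fun l _ => dvd_pow_self 2 (toFinset_parts_nonempty hm l).card_pos.ne'

theorem card_filter_restricted_card_toFinset_parts_eq_one {m : ℕ} (hm : m ≠ 0)
    (P : ℕ → Prop) [DecidablePred P] :
    #{l ∈ restricted m P | #l.parts.toFinset = 1} = #{d ∈ m.divisors | P d} := by
  have hquot {d : ℕ} (hd : d ∈ m.divisors) : m / d ≠ 0 :=
    (Nat.div_pos (Nat.divisor_le hd) (Nat.pos_of_mem_divisors hd)).ne'
  symm
  refine card_bij (fun d hd => ⟨Multiset.replicate (m / d) d,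
    fun hi => Multiset.eq_of_mem_replicate hi ▸ Nat.pos_of_mem_divisors (mem_filter.1 hd).1,
    by rw [Multiset.sum_replicate, smul_eq_mul,
      Nat.div_mul_cancel (Nat.dvd_of_mem_divisors (mem_filter.1 hd).1)]⟩) ?_ ?_ ?_
  · intro d hd
    obtain ⟨hdm, hPd⟩ := mem_filter.1 hd
    simp only [restricted, mem_filter, mem_univ, true_and, Multiset.toFinset_replicate,
      if_neg (hquot hdm), card_singleton, and_true]
    exact fun i hi => Multiset.eq_of_mem_replicate hi ▸ hPd
  · intro a ha b _ hab
    have hparts : Multiset.replicate (m / a) a = Multiset.replicate (m / b) b :=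
      congrArg Nat.Partition.parts hab
    have hmem : a ∈ Multiset.replicate (m / b) b := by
      rw [← hparts]
      exact Multiset.mem_replicate.2 ⟨hquot (mem_filter.1 ha).1, rfl⟩
    exact Multiset.eq_of_mem_replicate hmem
  · intro l hl
    obtain ⟨hlP, hl1⟩ := mem_filter.1 hl
    obtain ⟨a, ha⟩ := card_eq_one.1 hl1
    have hrep : l.parts = Multiset.replicate (Multiset.card l.parts) a :=
      Multiset.eq_replicate_card.2 fun b hb => by
        simpa [ha] using Multiset.mem_toFinset.2 hb
    have hmem : a ∈ l.parts := Multiset.mem_toFinset.1 (ha ▸ mem_singleton_self a)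
    have hsum : Multiset.card l.parts * a = m := by
      have := l.parts_sum
      rwa [hrep, Multiset.sum_replicate, smul_eq_mul] at this
    refine ⟨a, mem_filter.2 ⟨Nat.mem_divisors.2 ⟨Dvd.intro_left _ hsum, hm⟩,
      (mem_filter.1 hlP).2 a hmem⟩, Nat.Partition.ext ?_⟩
    dsimp only
    rw [hrep, Nat.div_eq_of_eq_mul_left (l.parts_pos hmem) hsum.symm]

theorem card_oddOverpartition_modEq {m : ℕ} (hm : m ≠ 0) :
    Nat.card (OddOverpartition m) ≡ 2 * #{d ∈ m.divisors | Odd d} [MOD 4] := by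
  rw [card_oddOverpartition,
    ← sum_filter_add_sum_filter_not (odds m) (fun l => #l.parts.toFinset = 1)]
  have hsingle : ∑ l ∈ odds m with #l.parts.toFinset = 1, 2 ^ #l.parts.toFinset =
      2 * #{d ∈ m.divisors | Odd d} := by
    rw [sum_congr rfl fun l hl => by rw [(mem_filter.1 hl).2, pow_one], sum_const, smul_eq_mul,
      mul_comm, odds, card_filter_restricted_card_toFinset_parts_eq_one hm]
    simp only [Nat.not_even_iff_odd]
  have hmulti : 4 ∣ ∑ l ∈ odds m with ¬#l.parts.toFinset = 1, 2 ^ #l.parts.toFinset := by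
    refine dvd_sum fun l hl => (pow_dvd_pow 2 ?_ : 2 ^ 2 ∣ _)
    have := (toFinset_parts_nonempty hm l).card_pos
    have := (mem_filter.1 hl).2
    omega
  rw [hsingle]
  exact ((Nat.modEq_zero_iff_dvd.2 hmulti).add_left _).trans (by rw [add_zero])

theorem even_card_divisors_of_odd_factorization {n p : ℕ} (h : Odd (n.factorization p)) :
    Even #n.divisors := by
  have hn : n ≠ 0 := by
    rintro rfl
    simp at h
  have hp : p ∈ n.primeFactors := by
    rw [← Nat.support_factorization]
    exact Finsupp.mem_support_iff.2 h.pos.ne'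
  rw [Nat.card_divisors hn, even_iff_two_dvd]
  exact h.add_one.two_dvd.trans (dvd_prod_of_mem _ hp)

theorem four_dvd_card_oddOverpartition {m p : ℕ} (hm : Odd m) (hp : Odd (m.factorization p)) :
    4 ∣ Nat.card (OddOverpartition m) := by
  have hodd : {d ∈ m.divisors | Odd d} = m.divisors :=
    filter_true_of_mem fun d hd => hm.of_dvd_nat (Nat.dvd_of_mem_divisors hd)
  obtain ⟨c, hc⟩ := even_card_divisors_of_odd_factorization hp
  have := card_oddOverpartition_modEq hm.pos.ne'
  rw [hodd, hc, Nat.ModEq, show 2 * (c + c) = 4 * c by ring, Nat.mul_mod_right] at this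
  exact Nat.dvd_of_mod_eq_zero this

theorem four_dvd_OPT_of_four_dvd {k N : ℕ} (hN : N ≠ 0)
    (h4 : 4 ∣ Nat.card (OddOverpartition N)) : 4 ∣ OPT k N := by
  rw [OPT_eq_sum_prod]
  refine dvd_sum fun x hx => ?_
  have hsum : ∑ i, x i = N := mem_antidiagonalTuple.1 hx
  by_cases htwo : ∃ i j, i ≠ j ∧ x i ≠ 0 ∧ x j ≠ 0
  · obtain ⟨i, j, hij, hi, hj⟩ := htwo
    calc 4 = 2 * 2 := rfl
      _ ∣ Nat.card (OddOverpartition (x i)) * Nat.card (OddOverpartition (x j)) :=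
        mul_dvd_mul (two_dvd_card_oddOverpartition hi) (two_dvd_card_oddOverpartition hj)
      _ = ∏ l ∈ {i, j}, Nat.card (OddOverpartition (x l)) := by rw [prod_pair hij]
      _ ∣ ∏ l, Nat.card (OddOverpartition (x l)) := prod_dvd_prod_of_subset _ _ _ (subset_univ _)
  · push Not at htwo
    obtain ⟨i, hi⟩ : ∃ i, x i ≠ 0 := by
      by_contra! h
      exact hN (by rw [← hsum]; exact sum_eq_zero fun i _ => h i)
    have hzero : ∀ j ≠ i, x j = 0 := fun j hj => htwo i j (Ne.symm hj) hi
    have hxi : x i = N := by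
      rw [← hsum, sum_eq_single i (fun j _ => hzero j) (by simp)]
    rwa [prod_eq_single i (fun j _ hj => by rw [hzero j hj, card_oddOverpartition_zero])
      (by simp), hxi]

theorem odd_factorization_sq_mul_pow_mul {a p e M : ℕ} (hp : p.Prime) (ha : a ≠ 0)
    (hpM : ¬ p ∣ M) : Odd ((a ^ 2 * p ^ (2 * e + 1) * M).factorization p) := by
  have hM : M ≠ 0 := by
    rintro rfl
    exact hpM (dvd_zero p)
  have hpe : p ^ (2 * e + 1) ≠ 0 := pow_ne_zero _ hp.ne_zero
  rw [Nat.factorization_mul (mul_ne_zero (pow_ne_zero 2 ha) hpe) hM,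
    Nat.factorization_mul (pow_ne_zero 2 ha) hpe, Finsupp.add_apply, Finsupp.add_apply,
    Nat.factorization_pow, Nat.factorization_pow, Finsupp.smul_apply, Finsupp.smul_apply,
    hp.factorization_self, Nat.factorization_eq_zero_of_not_dvd hpM, smul_eq_mul, smul_eq_mul,
    mul_one, add_zero]
  exact (even_two_mul _).add_odd (odd_two_mul_add_one e)

theorem Nat.Prime.not_dvd_mul_add_two_mul {p t : ℕ} (hp : p.Prime) (hp2 : p ≠ 2) (ht0 : 0 < t)
    (htp : t < p) (m : ℕ) : ¬ p ∣ p * m + 2 * t := by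
  rw [Nat.dvd_add_right (dvd_mul_right p m)]
  rintro hdvd
  rcases hp.dvd_mul.1 hdvd with h | h
  · exact hp2 ((Nat.prime_dvd_prime_iff_eq hp Nat.prime_two).1 h)
  · exact absurd (Nat.le_of_dvd ht0 h) (by omega)

/-- For a prime `p ≥ 3`, all `n, α, δ ≥ 0` and `t ∈ {1, …, p-1}`,
`OPT(2·3^{2α}·p^{2δ+1}(pn+t) + 3^{2α}·p^{2(δ+1)}) ≡ 0 (mod 4)`. -/
theorem opt_triple_inf_family_mod_four (p : ℕ) (hp : p.Prime) (hp3 : 3 ≤ p)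
    (n α δ t : ℕ) (ht1 : 1 ≤ t) (ht2 : t ≤ p - 1) :
    OPT 3 (2 * 3 ^ (2 * α) * p ^ (2 * δ + 1) * (p * n + t) + 3 ^ (2 * α) * p ^ (2 * (δ + 1)))
      ≡ 0 [MOD 4] := by
  have hp_odd : Odd p := hp.odd_of_ne_two (by omega)
  have hpM : ¬ p ∣ p * (2 * n + 1) + 2 * t :=
    hp.not_dvd_mul_add_two_mul (by omega) ht1 (by omega) _
  have hN : 2 * 3 ^ (2 * α) * p ^ (2 * δ + 1) * (p * n + t) + 3 ^ (2 * α) * p ^ (2 * (δ + 1)) =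
      (3 ^ α) ^ 2 * p ^ (2 * δ + 1) * (p * (2 * n + 1) + 2 * t) := by ring
  have hN_odd : Odd ((3 ^ α) ^ 2 * p ^ (2 * δ + 1) * (p * (2 * n + 1) + 2 * t)) :=
    ((Odd.pow (by decide)).pow.mul hp_odd.pow).mul
      ((hp_odd.mul (odd_two_mul_add_one n)).add_even (even_two_mul t))
  rw [Nat.modEq_zero_iff_dvd, hN]
  exact four_dvd_OPT_of_four_dvd hN_odd.pos.ne' <| four_dvd_card_oddOverpartition hN_odd <|
    odd_factorization_sq_mul_pow_mul hp (by positivity) hpM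
end

section
/- Let k = 2^m · r where m > 0 is an integer and r is an odd positive integer. Then for all integers n ≥ 1, the number of overpartition k-tuples with odd parts satisfies OPT_k(n) ≡ 0 (mod 2^{m+1}). -/
open Finset PowerSeries

theorem Set.Finite.even_ncard_of_involution {α : Type*} {s : Set α} (hs : s.Finite)
    {σ : α → α} (hmaps : Set.MapsTo σ s s) (hinv : ∀ x ∈ s, σ (σ x) = x)
    (hne : ∀ x ∈ s, σ x ≠ x) : Even s.ncard := by
  rw [← ZMod.natCast_eq_zero_iff_even, Set.ncard_eq_toFinset_card s hs, Finset.card_eq_sum_ones,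
    Nat.cast_sum, Nat.cast_one]
  refine Finset.sum_involution (fun x _ => σ x) (fun _ _ => by decide) ?_ ?_ ?_
  · exact fun x hx _ => hne x (by simpa using hx)
  · exact fun x hx => by simpa using hmaps (by simpa using hx)
  · exact fun x hx => hinv x (by simpa using hx)

theorem Multiset.sup_mem_of_ne_zero {α : Type*} [LinearOrder α] [OrderBot α] {s : Multiset α}
    (hs : s ≠ 0) : s.sup ∈ s := by
  obtain ⟨y, hy, hmax⟩ := s.exists_max_image id hs
  rwa [le_antisymm (Multiset.sup_le.2 hmax) (Multiset.le_sup hy)]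

theorem Multiset.finite_setOf_pos_sum_le (n : ℕ) :
    {s : Multiset ℕ | (∀ x ∈ s, 0 < x) ∧ s.sum ≤ n}.Finite := by
  refine ((Set.finite_Iic n).biUnion fun j _ =>
    Set.finite_range (Nat.Partition.parts (n := j))).subset ?_
  rintro s ⟨hpos, hle⟩
  exact Set.mem_biUnion (x := s.sum) hle ⟨⟨s, hpos _, rfl⟩, rfl⟩

theorem PowerSeries.C_dvd_iff_dvd_coeff {R : Type*} [Semiring R] (r : R) (φ : R⟦X⟧) :
    C r ∣ φ ↔ ∀ n, r ∣ coeff n φ := by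
  constructor
  · rintro ⟨ψ, rfl⟩ n
    rw [coeff_C_mul]
    exact dvd_mul_right _ _
  · intro h
    choose c hc using h
    exact ⟨mk c, by ext n; rw [coeff_C_mul, coeff_mk, hc]⟩

section WeightedTuples

variable {α : Type*} {S : Set α} {w : α → ℕ}

variable (S w) in
def weightedTuples (k n : ℕ) : Set (Fin k → α) :=
  {f | (∀ i, f i ∈ S) ∧ ∑ i, w (f i) = n}

theorem finite_weightedTuples (hS : ∀ n, {a ∈ S | w a ≤ n}.Finite) (k n : ℕ) :
    (weightedTuples S w k n).Finite := by
  refine (Set.Finite.pi (t := fun _ : Fin k => {a ∈ S | w a ≤ n}) fun _ => hS n).subset ?_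
  rintro f ⟨hfS, hsum⟩ i -
  exact ⟨hfS i, hsum ▸ Finset.single_le_sum (fun j _ => Nat.zero_le (w (f j))) (mem_univ i)⟩

theorem ncard_weightedTuples_zero (n : ℕ) :
    (weightedTuples S w 0 n).ncard = if n = 0 then 1 else 0 := by
  rcases eq_or_ne n 0 with rfl | hn
  · simp [weightedTuples]
  · simp [weightedTuples, hn, hn.symm]

theorem ncard_weightedTuples_one (n : ℕ) :
    (weightedTuples S w 1 n).ncard = {a ∈ S | w a = n}.ncard := by
  have : weightedTuples S w 1 n = (Equiv.funUnique (Fin 1) α).symm '' {a ∈ S | w a = n} := by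
    rw [Equiv.image_symm_eq_preimage]
    ext f
    simp [weightedTuples, Fin.forall_fin_one]
  rw [this, Set.ncard_image_of_injective _ (Equiv.injective _)]

theorem ncard_weightedTuples_add (hS : ∀ n, {a ∈ S | w a ≤ n}.Finite) (a b n : ℕ) :
    (weightedTuples S w (a + b) n).ncard = ∑ p ∈ antidiagonal n,
      (weightedTuples S w a p.1).ncard * (weightedTuples S w b p.2).ncard := by
  have hsplit : Fin.appendEquiv a b ⁻¹' weightedTuples S w (a + b) n =
      ⋃ p ∈ (antidiagonal n : Set (ℕ × ℕ)),
        weightedTuples S w a p.1 ×ˢ weightedTuples S w b p.2 := by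
    ext ⟨u, v⟩
    simp [weightedTuples, Fin.forall_fin_add, Fin.sum_univ_add, and_assoc]
  rw [← Set.ncard_preimage_of_injective_subset_range (Fin.appendEquiv a b).injective
    (by simp), hsplit, (finite_toSet _).ncard_biUnion, finsum_mem_coe_finset]
  · simp_rw [Set.ncard_prod]
  · exact fun p _ => (finite_weightedTuples hS a p.1).prod (finite_weightedTuples hS b p.2)
  · intro p _ q _ hpq
    refine Set.disjoint_left.2 fun x hp hq => hpq ?_
    exact Prod.ext (hp.1.2.symm.trans hq.1.2) (hp.2.2.symm.trans hq.2.2)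

theorem mk_ncard_weightedTuples (hS : ∀ n, {a ∈ S | w a ≤ n}.Finite) (R : Type*)
    [CommSemiring R] (k : ℕ) :
    mk (fun n => ((weightedTuples S w k n).ncard : R)) =
      (mk fun n => ({a ∈ S | w a = n}.ncard : R)) ^ k := by
  induction k with
  | zero =>
    ext n
    simp [ncard_weightedTuples_zero, coeff_one]
  | succ k ih =>
    ext n
    simp [pow_succ, ← ih, coeff_mul, ncard_weightedTuples_add hS, ncard_weightedTuples_one]

end WeightedTuples

def partSum (p : Multiset ℕ × Multiset ℕ) : ℕ := p.1.sum + p.2.sum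

def toggleLargest (p : Multiset ℕ × Multiset ℕ) : Multiset ℕ × Multiset ℕ :=
  if (p.1 + p.2).sup ∈ p.1 then (p.1.erase (p.1 + p.2).sup, (p.1 + p.2).sup ::ₘ p.2)
  else ((p.1 + p.2).sup ::ₘ p.1, p.2.erase (p.1 + p.2).sup)

section Toggle

variable {p : Multiset ℕ × Multiset ℕ}

theorem partSum_eq_sum_add (p : Multiset ℕ × Multiset ℕ) : partSum p = (p.1 + p.2).sum :=
  (Multiset.sum_add _ _).symm

theorem toggleLargest_ne_self (p : Multiset ℕ × Multiset ℕ) : toggleLargest p ≠ p := by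
  intro he
  have hcount := congrArg (fun q => q.1.count (p.1 + p.2).sup) he
  unfold toggleLargest at hcount
  split_ifs at hcount with hM
  · simp only [Multiset.count_erase_self] at hcount
    have := Multiset.count_pos.2 hM
    omega
  · simp only [Multiset.count_cons_self] at hcount
    omega

theorem toggleLargest_fst_add_snd (hp : p.1 + p.2 ≠ 0) :
    (toggleLargest p).1 + (toggleLargest p).2 = p.1 + p.2 := by
  have hM := Multiset.sup_mem_of_ne_zero hp
  unfold toggleLargest
  split_ifs with h
  · rw [Multiset.add_cons, ← Multiset.cons_add, Multiset.cons_erase h]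
  · rw [Multiset.cons_add, ← Multiset.add_cons,
      Multiset.cons_erase ((Multiset.mem_add.1 hM).resolve_left h)]

theorem partSum_toggleLargest (hp : p.1 + p.2 ≠ 0) : partSum (toggleLargest p) = partSum p := by
  rw [partSum_eq_sum_add, partSum_eq_sum_add, toggleLargest_fst_add_snd hp]

theorem toggleLargest_toggleLargest (hnd : p.1.Nodup) (hp : p.1 + p.2 ≠ 0) :
    toggleLargest (toggleLargest p) = p := by
  have hsup := congrArg Multiset.sup (toggleLargest_fst_add_snd hp)
  have hM := Multiset.sup_mem_of_ne_zero hp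
  rw [toggleLargest, hsup]
  unfold toggleLargest
  split_ifs with h h' h' <;> simp_all [hnd.notMem_erase]

theorem isOddOverpartition_toggleLargest (h : IsOddOverpartition p) (hp : p.1 + p.2 ≠ 0) :
    IsOddOverpartition (toggleLargest p) := by
  have hodd : ∀ x ∈ (toggleLargest p).1 + (toggleLargest p).2, Odd x := by
    rw [toggleLargest_fst_add_snd hp]
    exact fun x hx => (Multiset.mem_add.1 hx).elim (h.2.1 x) (h.2.2 x)
  refine ⟨?_, fun x hx => hodd x (Multiset.mem_add.2 (.inl hx)),
    fun x hx => hodd x (Multiset.mem_add.2 (.inr hx))⟩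
  unfold toggleLargest
  split_ifs with hM
  · exact h.1.erase _
  · exact Multiset.nodup_cons.2 ⟨hM, h.1⟩

end Toggle

theorem finite_setOf_isOddOverpartition_partSum_le (n : ℕ) :
    {p | IsOddOverpartition p ∧ partSum p ≤ n}.Finite := by
  refine ((Multiset.finite_setOf_pos_sum_le n).prod (Multiset.finite_setOf_pos_sum_le n)).subset ?_
  rintro p ⟨h, hle⟩
  unfold partSum at hle
  exact ⟨⟨fun x hx => (h.2.1 x hx).pos, by omega⟩, ⟨fun x hx => (h.2.2 x hx).pos, by omega⟩⟩

theorem setOf_isOddOverpartition_partSum_zero :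
    {p | IsOddOverpartition p ∧ partSum p = 0} = {(0, 0)} := by
  ext p
  constructor
  · rintro ⟨h, hp⟩
    have hzero : ∀ s : Multiset ℕ, (∀ x ∈ s, Odd x) → s.sum = 0 → s = 0 := fun s hs h0 =>
      Multiset.eq_zero_of_forall_notMem fun x hx =>
        (hs x hx).pos.ne' (Multiset.sum_eq_zero_iff.1 h0 x hx)
    unfold partSum at hp
    exact Prod.ext (hzero _ h.2.1 (by omega)) (hzero _ h.2.2 (by omega))
  · rintro rfl
    exact ⟨⟨Multiset.nodup_zero, by simp, by simp⟩, rfl⟩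

theorem even_ncard_setOf_isOddOverpartition_partSum {n : ℕ} (hn : n ≠ 0) :
    Even {p | IsOddOverpartition p ∧ partSum p = n}.ncard := by
  have hne : ∀ p ∈ {p | IsOddOverpartition p ∧ partSum p = n}, p.1 + p.2 ≠ 0 := by
    rintro p ⟨-, rfl⟩ h
    exact hn (by rw [partSum_eq_sum_add, h, Multiset.sum_zero])
  refine ((finite_setOf_isOddOverpartition_partSum_le n).subset fun p hp => ⟨hp.1, hp.2.le⟩)
    |>.even_ncard_of_involution (σ := toggleLargest) ?_ ?_ ?_
  · exact fun p hp => ⟨isOddOverpartition_toggleLargest hp.1 (hne p hp),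
      (partSum_toggleLargest (hne p hp)).trans hp.2⟩
  · exact fun p hp => toggleLargest_toggleLargest hp.1.1 (hne p hp)
  · exact fun p _ => toggleLargest_ne_self p

theorem OPT_eq_ncard_weightedTuples (k n : ℕ) :
    OPT k n = (weightedTuples {p | IsOddOverpartition p} partSum k n).ncard := rfl

theorem opt_tuple_mod_pow_two_general (m r k : ℕ) (hk : k = 2 ^ m * r) (n : ℕ) (hn : 1 ≤ n) :
    OPT k n ≡ 0 [MOD 2 ^ (m + 1)] := by
  set A : ℤ⟦X⟧ := mk fun j => ({p | IsOddOverpartition p ∧ partSum p = j}.ncard : ℤ)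
  have hA : C (2 : ℤ) ∣ A - 1 := by
    refine (C_dvd_iff_dvd_coeff _ _).2 fun j => ?_
    rcases eq_or_ne j 0 with rfl | hj
    · simp [A, setOf_isOddOverpartition_partSum_zero]
    · simpa [A, coeff_one, hj] using
        Int.natCast_dvd_natCast.2 (even_ncard_setOf_isOddOverpartition_partSum hj).two_dvd
  have hAk : C ((2 : ℤ) ^ (m + 1)) ∣ A ^ k - 1 := by
    have hA2 : C (2 : ℤ) ^ (m + 1) ∣ A ^ 2 ^ m - 1 := by
      simpa using dvd_sub_pow_of_dvd_sub (p := 2) (a := A) (b := 1) (by simpa using hA) m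
    rw [hk, pow_mul, map_pow]
    exact hA2.trans (sub_one_dvd_pow_sub_one _ r)
  have hpow : A ^ k = mk fun j => (OPT k j : ℤ) := by
    simp only [OPT_eq_ncard_weightedTuples]
    exact (mk_ncard_weightedTuples finite_setOf_isOddOverpartition_partSum_le ℤ k).symm
  have hcoeff := (C_dvd_iff_dvd_coeff _ _).1 hAk n
  rw [hpow, map_sub, coeff_mk, coeff_one, if_neg (by omega), sub_zero] at hcoeff
  exact Nat.modEq_zero_iff_dvd.2 (by exact_mod_cast hcoeff)

/-- If `k = 2^m · r` with `m > 0` and `r` odd and positive, then for all `n ≥ 1`,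
`OPT_k(n) ≡ 0 (mod 2^{m+1})`. -/
theorem opt_tuple_mod_pow_two (m r k : ℕ) (hm : 0 < m) (hr : Odd r) (hrpos : 0 < r)
    (hk : k = 2 ^ m * r) (n : ℕ) (hn : 1 ≤ n) :
    OPT k n ≡ 0 [MOD 2 ^ (m + 1)] :=
  opt_tuple_mod_pow_two_general m r k hk n hn
end

section
/- For all integers n ≥ 0 and k ≥ 1, the number of overpartition (2k+1)-tuples with odd parts is congruent modulo 4 to the number of overpartitions of n with odd parts: OPT_{2k+1}(n) ≡ p̄_o(n) (mod 4). -/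
namespace OptAux

/-- The set counted by `OPT k n`. -/
def S (k n : ℕ) : Set (Fin k → Multiset ℕ × Multiset ℕ) :=
  {f | (∀ i, IsOddOverpartition (f i)) ∧ (∑ i, ((f i).1.sum + (f i).2.sum)) = n}

lemma OPT_eq (k n : ℕ) : OPT k n = Nat.card (S k n) :=
  (Nat.card_coe_set_eq _).symm

lemma finite_multiset (n : ℕ) :
    {m : Multiset ℕ | m.sum ≤ n ∧ ∀ x ∈ m, 0 < x}.Finite := by
  rw [← Set.finite_coe_iff]
  refine Finite.of_injective
    (fun m => (⟨⟨m.1.sum, Nat.lt_succ_of_le m.2.1⟩,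
      ⟨m.1, fun {i} hi => m.2.2 i hi, rfl⟩⟩ : Σ s : Fin (n + 1), Nat.Partition s)) ?_
  intro a b h
  exact Subtype.ext
    (congrArg (fun x : Σ s : Fin (n + 1), Nat.Partition (s : ℕ) => x.2.parts) h)

lemma finite_S (k n : ℕ) : (S k n).Finite := by
  apply Set.Finite.subset
    (Set.Finite.pi (fun _ : Fin k => (finite_multiset n).prod (finite_multiset n)))
  intro f hf
  rw [Set.mem_pi]
  intro i _
  obtain ⟨h1, h2⟩ := hf
  have hle : (f i).1.sum + (f i).2.sum ≤ n := by
    rw [← h2]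
    exact Finset.single_le_sum (f := fun j => (f j).1.sum + (f j).2.sum)
      (fun j _ => Nat.zero_le _) (Finset.mem_univ i)
  obtain ⟨hnd, ho1, ho2⟩ := h1 i
  exact ⟨⟨by omega, fun x hx => (ho1 x hx).pos⟩, ⟨by omega, fun x hx => (ho2 x hx).pos⟩⟩

/-- Convolution: splitting a `(a+b)`-tuple into its first `a` and last `b`
coordinates. -/
lemma OPT_add (a b n : ℕ) :
    OPT (a + b) n = ∑ m ∈ Finset.range (n + 1), OPT a m * OPT b (n - m) := by
  classical
  have key : Nat.card (Σ m : Fin (n + 1), S a m × S b (n - m))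
      = Nat.card (S (a + b) n) := by
    refine Nat.card_eq_of_bijective (fun x =>
      ⟨Fin.append x.2.1.1 x.2.2.1, ?_⟩) ⟨?_, ?_⟩
    · obtain ⟨⟨m, hm⟩, ⟨g, hg1, hg2⟩, ⟨h, hh1, hh2⟩⟩ := x
      constructor
      · intro i
        induction i using Fin.addCases with
        | left i => simpa [Fin.append_left] using hg1 i
        | right i => simpa [Fin.append_right] using hh1 i
      · rw [Fin.sum_univ_add]
        simp only [Fin.append_left, Fin.append_right]
        rw [hg2, hh2]
        simp only [Fin.val_mk] at hm ⊢
        omega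
    · rintro ⟨⟨m1, hm1⟩, ⟨g1, hg1a, hg1b⟩, ⟨h1, hh1a, hh1b⟩⟩
        ⟨⟨m2, hm2⟩, ⟨g2, hg2a, hg2b⟩, ⟨h2, hh2a, hh2b⟩⟩ hxy
      have hval := congrArg Subtype.val hxy
      simp only at hval
      have hg : g1 = g2 := funext fun i => by
        have := congrFun hval (Fin.castAdd b i)
        simpa [Fin.append_left] using this
      have hh : h1 = h2 := funext fun i => by
        have := congrFun hval (Fin.natAdd a i)
        simpa [Fin.append_right] using this
      subst hg; subst hh
      have hmm : m1 = m2 := by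
        simp only [Fin.val_mk] at hg1b hg2b
        omega
      subst hmm
      rfl
    · rintro ⟨f, hf1, hf2⟩
      have hsplit : (∑ i : Fin a, ((f (Fin.castAdd b i)).1.sum + (f (Fin.castAdd b i)).2.sum))
          + (∑ i : Fin b, ((f (Fin.natAdd a i)).1.sum + (f (Fin.natAdd a i)).2.sum)) = n := by
        have h := Fin.sum_univ_add (f := fun i => (f i).1.sum + (f i).2.sum)
        rw [← h]; exact hf2
      refine ⟨⟨⟨∑ i : Fin a, ((f (Fin.castAdd b i)).1.sum + (f (Fin.castAdd b i)).2.sum),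
        by omega⟩,
        ⟨fun i => f (Fin.castAdd b i), fun i => hf1 _, rfl⟩,
        ⟨fun i => f (Fin.natAdd a i), fun i => hf1 _, by simp only [Fin.val_mk]; omega⟩⟩, ?_⟩
      exact Subtype.ext Fin.append_castAdd_natAdd
  haveI : ∀ (k m : ℕ), Fintype (S k m) := fun k m => (finite_S k m).fintype
  rw [OPT_eq, ← key, Nat.card_eq_fintype_card, Fintype.card_sigma, Finset.sum_range]
  refine Finset.sum_congr rfl fun m _ => ?_
  rw [Fintype.card_prod, OPT_eq, OPT_eq, Nat.card_eq_fintype_card, Nat.card_eq_fintype_card]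

lemma OPT_zero (k : ℕ) : OPT k 0 = 1 := by
  have hset : S k 0 = {fun _ => (0, 0)} := by
    ext f
    simp only [S, Set.mem_setOf_eq, Set.mem_singleton_iff]
    constructor
    · rintro ⟨h1, h2⟩
      funext i
      have hi : (f i).1.sum + (f i).2.sum ≤ 0 := by
        rw [← h2]
        exact Finset.single_le_sum (f := fun j => (f j).1.sum + (f j).2.sum)
          (fun j _ => Nat.zero_le _) (Finset.mem_univ i)
      obtain ⟨hnd, ho1, ho2⟩ := h1 i
      have e1 : (f i).1 = 0 := Multiset.eq_zero_of_forall_notMem fun x hx =>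
        ((ho1 x hx).pos.ne' (Multiset.sum_eq_zero_iff.1 (by omega) x hx)).elim
      have e2 : (f i).2 = 0 := Multiset.eq_zero_of_forall_notMem fun x hx =>
        ((ho2 x hx).pos.ne' (Multiset.sum_eq_zero_iff.1 (by omega) x hx)).elim
      exact Prod.ext e1 e2
    · rintro rfl
      refine ⟨fun i => ⟨Multiset.nodup_zero, by simp, by simp⟩, by simp⟩
  have : OPT k 0 = (S k 0).ncard := rfl
  rw [this, hset, Set.ncard_singleton]

/-- The set of single overpartitions of `n` with odd parts. -/
def Tset (n : ℕ) : Set (Multiset ℕ × Multiset ℕ) :=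
  {p | IsOddOverpartition p ∧ p.1.sum + p.2.sum = n}

lemma finite_T (n : ℕ) : (Tset n).Finite := by
  apply Set.Finite.subset ((finite_multiset n).prod (finite_multiset n))
  rintro p ⟨⟨hnd, ho1, ho2⟩, hs⟩
  exact ⟨⟨by omega, fun x hx => (ho1 x hx).pos⟩, ⟨by omega, fun x hx => (ho2 x hx).pos⟩⟩

lemma OPT_one (n : ℕ) : OPT 1 n = Nat.card (Tset n) := by
  rw [OPT_eq]
  refine (Nat.card_eq_of_bijective (fun p : Tset n =>
    (⟨fun _ => p.1, fun _ => p.2.1, by simpa using p.2.2⟩ : S 1 n)) ⟨?_, ?_⟩).symm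
  · intro p q h
    have := congrFun (congrArg Subtype.val h) 0
    exact Subtype.ext this
  · rintro ⟨f, hf1, hf2⟩
    refine ⟨⟨f 0, hf1 0, by simpa using hf2⟩, ?_⟩
    exact Subtype.ext (funext fun i => by rw [Subsingleton.elim i 0])

/-- The toggling involution: move the largest part between the overlined and
non-overlined multisets. -/
def flipMax (p : Multiset ℕ × Multiset ℕ) : Multiset ℕ × Multiset ℕ :=
  let m := WithBot.unbotD 0 (p.1 + p.2).toFinset.max
  if m ∈ p.1 then (p.1.erase m, m ::ₘ p.2) else (m ::ₘ p.1, p.2.erase m)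

lemma max_mem {t : Multiset ℕ} (ht : t ≠ 0) : WithBot.unbotD 0 t.toFinset.max ∈ t := by
  have hne : t.toFinset.Nonempty := by
    simpa [Multiset.toFinset_nonempty] using ht
  obtain ⟨a, ha⟩ := Finset.max_of_nonempty hne
  rw [ha]
  exact Multiset.mem_toFinset.1 (Finset.mem_of_max ha)

lemma flip_spec (p : Multiset ℕ × Multiset ℕ) (hp : IsOddOverpartition p)
    (ht : p.1 + p.2 ≠ 0) :
    IsOddOverpartition (flipMax p)
    ∧ (flipMax p).1.sum + (flipMax p).2.sum = p.1.sum + p.2.sum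
    ∧ (flipMax p).1 + (flipMax p).2 = p.1 + p.2
    ∧ flipMax p ≠ p := by
  classical
  obtain ⟨hnd, ho1, ho2⟩ := hp
  set m := WithBot.unbotD 0 (p.1 + p.2).toFinset.max with hmdef
  have hmem : m ∈ p.1 + p.2 := max_mem ht
  have hmodd : Odd m := by
    rcases Multiset.mem_add.1 hmem with h | h
    · exact ho1 m h
    · exact ho2 m h
  by_cases h1 : m ∈ p.1
  · have hflip : flipMax p = (p.1.erase m, m ::ₘ p.2) := by
      rw [flipMax]; simp only [← hmdef, if_pos h1]
    have hsum1 : m + (p.1.erase m).sum = p.1.sum := by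
      conv_rhs => rw [← Multiset.cons_erase h1]
      rw [Multiset.sum_cons]
    refine ⟨?_, ?_, ?_, ?_⟩
    · rw [hflip]
      exact ⟨hnd.erase m, fun x hx => ho1 x (Multiset.mem_of_mem_erase hx),
        fun x hx => by
          rcases Multiset.mem_cons.1 hx with rfl | hx
          · exact hmodd
          · exact ho2 x hx⟩
    · rw [hflip]; simp only [Multiset.sum_cons]; omega
    · rw [hflip]
      simp only
      rw [Multiset.add_cons, ← Multiset.cons_add, Multiset.cons_erase h1]
    · rw [hflip]
      intro hcon
      have hE : p.1.erase m = p.1 := congrArg Prod.fst hcon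
      have hcnt := Multiset.count_erase_self m p.1
      rw [hE] at hcnt
      have hpos : 0 < p.1.count m := Multiset.count_pos.2 h1
      omega
  · have h2 : m ∈ p.2 := by
      rcases Multiset.mem_add.1 hmem with h | h
      · exact absurd h h1
      · exact h
    have hflip : flipMax p = (m ::ₘ p.1, p.2.erase m) := by
      rw [flipMax]; simp only [← hmdef, if_neg h1]
    have hsum2 : m + (p.2.erase m).sum = p.2.sum := by
      conv_rhs => rw [← Multiset.cons_erase h2]
      rw [Multiset.sum_cons]
    refine ⟨?_, ?_, ?_, ?_⟩
    · rw [hflip]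
      exact ⟨Multiset.nodup_cons.2 ⟨h1, hnd⟩,
        fun x hx => by
          rcases Multiset.mem_cons.1 hx with rfl | hx
          · exact hmodd
          · exact ho1 x hx,
        fun x hx => ho2 x (Multiset.mem_of_mem_erase hx)⟩
    · rw [hflip]; simp only [Multiset.sum_cons]; omega
    · rw [hflip]
      simp only
      rw [Multiset.cons_add, ← Multiset.add_cons, Multiset.cons_erase h2]
    · rw [hflip]
      intro hcon
      have hE : m ::ₘ p.1 = p.1 := congrArg Prod.fst hcon
      have := congrArg Multiset.card hE
      rw [Multiset.card_cons] at this
      omega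

lemma flip_flip (p : Multiset ℕ × Multiset ℕ) (hp : IsOddOverpartition p)
    (ht : p.1 + p.2 ≠ 0) : flipMax (flipMax p) = p := by
  classical
  obtain ⟨hnd, ho1, ho2⟩ := hp
  set m := WithBot.unbotD 0 (p.1 + p.2).toFinset.max with hmdef
  have hmem : m ∈ p.1 + p.2 := max_mem ht
  have hinv : (flipMax p).1 + (flipMax p).2 = p.1 + p.2 :=
    (flip_spec p ⟨hnd, ho1, ho2⟩ ht).2.2.1
  have hm2 : (flipMax p).1 + (flipMax p).2 ≠ 0 := by rw [hinv]; exact ht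
  have hmsame : WithBot.unbotD 0 ((flipMax p).1 + (flipMax p).2).toFinset.max = m := by
    rw [hinv]
  by_cases h1 : m ∈ p.1
  · have hflip : flipMax p = (p.1.erase m, m ::ₘ p.2) := by
      rw [flipMax]; simp only [← hmdef, if_pos h1]
    have hnotm : m ∉ (flipMax p).1 := by
      rw [hflip]; exact hnd.notMem_erase
    rw [flipMax, hmsame, if_neg hnotm, hflip]
    simp only [Multiset.erase_cons_head]
    rw [Multiset.cons_erase h1]
  · have h2 : m ∈ p.2 := by
      rcases Multiset.mem_add.1 hmem with h | h
      · exact absurd h h1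
      · exact h
    have hflip : flipMax p = (m ::ₘ p.1, p.2.erase m) := by
      rw [flipMax]; simp only [← hmdef, if_neg h1]
    have hm_mem : m ∈ (flipMax p).1 := by
      rw [hflip]; exact Multiset.mem_cons_self m p.1
    rw [flipMax, hmsame, if_pos hm_mem, hflip]
    simp only [Multiset.erase_cons_head]
    rw [Multiset.cons_erase h2]

lemma OPT_one_even (n : ℕ) (hn : 1 ≤ n) : 2 ∣ OPT 1 n := by
  classical
  rw [OPT_one]
  haveI : Fintype (Tset n) := (finite_T n).fintype
  rw [Nat.card_eq_fintype_card]
  have hne : ∀ p : Tset n, p.1.1 + p.1.2 ≠ 0 := by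
    rintro ⟨p, hp1, hp2⟩ hcon
    have : p.1 = 0 ∧ p.2 = 0 := by
      constructor <;> [exact Multiset.eq_zero_of_forall_notMem fun x hx =>
        Multiset.notMem_zero x (hcon ▸ Multiset.mem_add.2 (Or.inl hx));
        exact Multiset.eq_zero_of_forall_notMem fun x hx =>
        Multiset.notMem_zero x (hcon ▸ Multiset.mem_add.2 (Or.inr hx))]
    simp only [this.1, this.2, Multiset.sum_zero] at hp2
    omega
  set g : Tset n → Tset n := fun p =>
    ⟨flipMax p.1, (flip_spec p.1 p.2.1 (hne p)).1, by
      rw [(flip_spec p.1 p.2.1 (hne p)).2.1]; exact p.2.2⟩ with hgdef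
  have h0 : ∑ _x : Tset n, (1 : ZMod 2) = 0 := by
    apply Finset.sum_ninvolution g
    · intro a; decide
    · intro a _
      intro hcon
      exact (flip_spec a.1 a.2.1 (hne a)).2.2.2 (congrArg Subtype.val hcon)
    · intro a; exact Finset.mem_univ _
    · intro a
      exact Subtype.ext (flip_flip a.1 a.2.1 (hne a))
  rw [Finset.sum_const, Finset.card_univ, nsmul_eq_mul, mul_one] at h0
  exact (ZMod.natCast_eq_zero_iff _ 2).1 h0

lemma OPT_two_cast (n : ℕ) (hn : 1 ≤ n) : ((OPT 2 n : ℕ) : ZMod 4) = 0 := by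
  have hconv := OPT_add 1 1 n
  have heven : ∀ m : ℕ, 1 ≤ m → ∃ c : ℕ, OPT 1 m = 2 * c := by
    intro m hm
    exact (OPT_one_even m hm).imp fun c hc => hc
  obtain ⟨n', rfl⟩ : ∃ n', n = n' + 1 := ⟨n - 1, by omega⟩
  rw [show (1 + 1 : ℕ) = 2 from rfl] at hconv
  rw [hconv]
  push_cast
  rw [Finset.sum_range_succ, Finset.sum_range_succ']
  have hmid : ∑ i ∈ Finset.range n', ((OPT 1 (i + 1) : ZMod 4) * OPT 1 (n' + 1 - (i + 1))) = 0 := by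
    apply Finset.sum_eq_zero
    intro i hi
    have hi' : i < n' := Finset.mem_range.1 hi
    obtain ⟨c, hc⟩ := heven (i + 1) (by omega)
    obtain ⟨d, hd⟩ := heven (n' + 1 - (i + 1)) (by omega)
    rw [hc, hd]
    push_cast
    ring_nf
    rw [show (4 : ZMod 4) = 0 from rfl, mul_zero]
  rw [hmid, zero_add, Nat.sub_zero, Nat.sub_self, OPT_zero]
  obtain ⟨c, hc⟩ := heven (n' + 1) (by omega)
  rw [hc]
  push_cast
  ring_nf
  rw [show (4 : ZMod 4) = 0 from rfl, mul_zero]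

lemma OPT_step (j n : ℕ) : ((OPT (j + 2) n : ℕ) : ZMod 4) = ((OPT j n : ℕ) : ZMod 4) := by
  rw [OPT_add j 2 n]
  push_cast
  rw [Finset.sum_range_succ]
  have h1 : ∑ m ∈ Finset.range n, ((OPT j m : ZMod 4) * ((OPT 2 (n - m) : ℕ) : ZMod 4)) = 0 :=
    Finset.sum_eq_zero fun m hm => by
      rw [OPT_two_cast (n - m) (by have := Finset.mem_range.1 hm; omega), mul_zero]
  rw [h1, zero_add, Nat.sub_self, OPT_zero]
  push_cast
  ring

end OptAux

/-- For all `n ≥ 0` and `k ≥ 1`, `OPT_{2k+1}(n) ≡ p̄_o(n) (mod 4)`, where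
`p̄_o(n) = OPT_1(n)` is the number of overpartitions of `n` into odd parts. -/
theorem opt_odd_tuple_congr_mod_four (n k : ℕ) (hk : 1 ≤ k) :
    OPT (2 * k + 1) n ≡ OPT 1 n [MOD 4] := by
  rw [← ZMod.natCast_eq_natCast_iff]
  clear hk
  induction k with
  | zero => norm_num
  | succ k ih =>
    rw [show 2 * (k + 1) + 1 = (2 * k + 1) + 2 by ring, OptAux.OPT_step]
    exact ih
end

section
/- Let p ≥ 5 be a prime, let r with 1 ≤ r ≤ p−1 be a quadratic nonresidue modulo p, and set R = r if r is odd and R = p + r if r is even. Then for all integers n ≥ 0 and k ≥ 0, the number of overpartition (2k+1)-tuples with odd parts satisfies OPT_{2k+1}(2pn + R) ≡ 0 (mod 4). -/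
open Finset

def antidiagonalSigmaEquiv {α β : Type*} (u : α → ℕ) (v : β → ℕ) (n : ℕ) :
    {x : α × β // u x.1 + v x.2 = n} ≃
      Σ p : antidiagonal n, {a // u a = p.1.1} × {b // v b = p.1.2} where
  toFun x := ⟨⟨(u x.1.1, v x.1.2), mem_antidiagonal.2 x.2⟩, ⟨x.1.1, rfl⟩, ⟨x.1.2, rfl⟩⟩
  invFun y := ⟨(y.2.1.1, y.2.2.1), by rw [y.2.1.2, y.2.2.2]; exact mem_antidiagonal.1 y.1.2⟩
  left_inv _ := rfl
  right_inv := by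
    rintro ⟨⟨⟨_, _⟩, _⟩, ⟨a, ha⟩, ⟨b, hb⟩⟩
    simp only at ha hb
    subst ha hb
    rfl

theorem Nat.card_subtype_add_eq_sum_antidiagonal {α β : Type*} (u : α → ℕ) (v : β → ℕ)
    [∀ i, Finite {a // u a = i}] [∀ j, Finite {b // v b = j}] (n : ℕ) :
    Nat.card {x : α × β // u x.1 + v x.2 = n} =
      ∑ p ∈ antidiagonal n, Nat.card {a // u a = p.1} * Nat.card {b // v b = p.2} := by
  rw [Nat.card_congr (antidiagonalSigmaEquiv u v n), Nat.card_sigma,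
    ← sum_coe_sort (antidiagonal n)]
  simp only [Nat.card_prod]

def Multiset.nodupAddEquiv {α : Type*} [DecidableEq α] (m : Multiset α) :
    {x : Multiset α × Multiset α // x.1.Nodup ∧ x.1 + x.2 = m} ≃ m.toFinset.powerset where
  toFun x := ⟨x.1.1.toFinset, Finset.mem_powerset.2 fun a ha => by
    rw [Multiset.mem_toFinset, ← x.2.2] at *; exact Multiset.mem_add.2 (Or.inl ha)⟩
  invFun S := ⟨(S.1.val, m - S.1.val), S.1.nodup, add_tsub_cancel_of_le <|
    (Multiset.le_iff_subset S.1.nodup).2 fun a ha =>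
      Multiset.mem_toFinset.1 (Finset.mem_powerset.1 S.2 ha)⟩
  left_inv := by
    rintro ⟨⟨s, t⟩, hs, rfl⟩
    ext1
    simp only [Multiset.toFinset_val, hs.dedup, add_tsub_cancel_left]
  right_inv S := Subtype.ext S.1.val_toFinset

instance {α : Type*} [DecidableEq α] (m : Multiset α) :
    Finite {x : Multiset α × Multiset α // x.1.Nodup ∧ x.1 + x.2 = m} :=
  Finite.of_equiv _ m.nodupAddEquiv.symm

theorem Finset.even_card_of_involution {α : Type*} {s : Finset α} (g : α → α)
    (hg_mem : ∀ a ∈ s, g a ∈ s) (hg_ne : ∀ a ∈ s, g a ≠ a) (hg_inv : ∀ a ∈ s, g (g a) = a) :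
    Even #s := by
  rw [← ZMod.natCast_eq_zero_iff_even, card_eq_sum_ones, Nat.cast_sum, Nat.cast_one]
  exact sum_involution (fun a _ => g a) (fun _ _ => by decide) (fun a ha _ => hg_ne a ha)
    hg_mem hg_inv

theorem Nat.even_card_divisors {n : ℕ} (hn : ¬IsSquare n) : Even #n.divisors := by
  have hn0 : n ≠ 0 := by rintro rfl; exact hn ⟨0, rfl⟩
  refine even_card_of_involution (n / ·) (fun d hd => ?_) (fun d hd hd' => ?_)
    fun d hd => Nat.div_div_self (Nat.dvd_of_mem_divisors hd) hn0
  · exact Nat.mem_divisors.2 ⟨Nat.div_dvd_of_dvd (Nat.dvd_of_mem_divisors hd), hn0⟩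
  · exact hn ⟨d, by rw [← Nat.mul_div_cancel' (Nat.dvd_of_mem_divisors hd), hd']⟩

theorem Int.sq_modEq_self_two (x : ℤ) : x ^ 2 ≡ x [ZMOD 2] := by
  refine (ZMod.intCast_eq_intCast_iff _ _ 2).1 ?_
  rw [Int.cast_pow]
  exact ZMod.pow_card _

def OddTuple (k : ℕ) : Type :=
  {f : Fin k → Multiset ℕ × Multiset ℕ // ∀ i, IsOddOverpartition (f i)}

namespace OddTuple

def weight {k : ℕ} (f : OddTuple k) : ℕ := ∑ i, ((f.1 i).1.sum + (f.1 i).2.sum)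

def appendEquiv (k j : ℕ) : OddTuple (k + j) ≃ OddTuple k × OddTuple j where
  toFun f := (⟨fun i => f.1 (Fin.castAdd j i), fun _ => f.2 _⟩,
    ⟨fun i => f.1 (Fin.natAdd k i), fun _ => f.2 _⟩)
  invFun g := ⟨Fin.append g.1.1 g.2.1, Fin.addCases (by simpa using g.1.2) (by simpa using g.2.2)⟩
  left_inv f := Subtype.ext (Fin.append_castAdd_natAdd (f := f.1))
  right_inv g := by ext1 <;> apply Subtype.ext <;> funext i <;> simp

theorem weight_eq_add (k j : ℕ) (f : OddTuple (k + j)) :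
    f.weight = (appendEquiv k j f).1.weight + (appendEquiv k j f).2.weight :=
  Fin.sum_univ_add _

def weightAppendEquiv (k j n : ℕ) : {f : OddTuple (k + j) // f.weight = n} ≃
    {g : OddTuple k × OddTuple j // g.1.weight + g.2.weight = n} :=
  (appendEquiv k j).subtypeEquiv fun f => by rw [weight_eq_add]

theorem weight_one (f : OddTuple 1) : f.weight = (f.1 0).1.sum + (f.1 0).2.sum :=
  Fin.sum_univ_one _

end OddTuple

open OddTuple

theorem OPT_eq_card (k n : ℕ) : OPT k n = Nat.card {f : OddTuple k // f.weight = n} :=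
  (Nat.card_coe_set_eq _).symm.trans
    (Nat.card_congr ⟨fun f => ⟨⟨f.1, f.2.1⟩, f.2.2⟩, fun f => ⟨f.1.1, f.1.2, f.2⟩,
      fun _ => rfl, fun _ => rfl⟩)

theorem Nat.Partition.mem_odds {n : ℕ} {π : n.Partition} : π ∈ odds n ↔ ∀ i ∈ π.parts, Odd i := by
  simp [odds, restricted]

def oddTupleOneEquiv (n : ℕ) : {f : OddTuple 1 // f.weight = n} ≃
    Σ π : Nat.Partition.odds n,
      {x : Multiset ℕ × Multiset ℕ // x.1.Nodup ∧ x.1 + x.2 = π.1.parts} where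
  toFun f :=
    have hodd : ∀ i ∈ (f.1.1 0).1 + (f.1.1 0).2, Odd i := fun i hi =>
      (Multiset.mem_add.1 hi).elim ((f.1.2 0).2.1 i) ((f.1.2 0).2.2 i)
    ⟨⟨⟨(f.1.1 0).1 + (f.1.1 0).2, fun hi => (hodd _ hi).pos, by
        rw [Multiset.sum_add]; exact (weight_one f.1).symm.trans f.2⟩,
      Nat.Partition.mem_odds.2 hodd⟩, ⟨f.1.1 0, (f.1.2 0).1, rfl⟩⟩
  invFun y :=
    have hodd : ∀ i ∈ y.2.1.1 + y.2.1.2, Odd i := by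
      rw [y.2.2.2]; exact Nat.Partition.mem_odds.1 y.1.2
    ⟨⟨fun _ => y.2.1, fun _ => ⟨y.2.2.1, fun i hi => hodd i (Multiset.mem_add.2 (Or.inl hi)),
        fun i hi => hodd i (Multiset.mem_add.2 (Or.inr hi))⟩⟩,
      (weight_one _).trans <| by rw [← Multiset.sum_add, y.2.2.2, y.1.1.parts_sum]⟩
  left_inv f := Subtype.ext <| Subtype.ext <| funext fun i => by rw [Subsingleton.elim i 0]
  right_inv := by
    rintro ⟨⟨⟨_, _, _⟩, _⟩, ⟨x, _, hxm⟩⟩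
    simp only at hxm
    subst hxm
    rfl

theorem OPT_one (n : ℕ) : OPT 1 n = ∑ π ∈ Nat.Partition.odds n, 2 ^ #π.parts.toFinset := by
  rw [OPT_eq_card, Nat.card_congr (oddTupleOneEquiv n), Nat.card_sigma,
    ← sum_coe_sort (Nat.Partition.odds n)]
  refine sum_congr rfl fun π _ => ?_
  rw [Nat.card_congr (Multiset.nodupAddEquiv _), Nat.card_eq_finsetCard, card_powerset]

instance OddTuple.finite_weight_eq (k n : ℕ) : Finite {f : OddTuple k // f.weight = n} := by
  induction k generalizing n with
  | zero =>
    have : Subsingleton (OddTuple 0) := ⟨fun f g => Subtype.ext (Subsingleton.elim _ _)⟩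
    infer_instance
  | succ k ih =>
    have (m : ℕ) : Finite {f : OddTuple 1 // f.weight = m} :=
      Finite.of_equiv _ (oddTupleOneEquiv m).symm
    exact Finite.of_equiv _
      ((weightAppendEquiv k 1 n).trans (antidiagonalSigmaEquiv weight weight n)).symm

theorem OPT_add (k j n : ℕ) : OPT (k + j) n = ∑ p ∈ antidiagonal n, OPT k p.1 * OPT j p.2 := by
  simp only [OPT_eq_card]
  rw [Nat.card_congr (weightAppendEquiv k j n), Nat.card_subtype_add_eq_sum_antidiagonal]

theorem Nat.Partition.parts_ne_zero {n : ℕ} (hn : n ≠ 0) (π : n.Partition) : π.parts ≠ 0 :=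
  fun h => hn (by rw [← π.parts_sum, h, Multiset.sum_zero])

theorem Nat.Partition.card_filter_odds_card_toFinset_eq_one {n : ℕ} (hn : Odd n) :
    #{π ∈ odds n | #π.parts.toFinset = 1} = #n.divisors := by
  symm
  refine card_bij (fun d hd => ⟨Multiset.replicate (n / d) d,
      fun hi => Multiset.eq_of_mem_replicate hi ▸ Nat.pos_of_mem_divisors hd,
      by rw [Multiset.sum_replicate, smul_eq_mul, Nat.div_mul_cancel (Nat.dvd_of_mem_divisors hd)]⟩)
    (fun d hd => ?_) (fun d₁ hd₁ d₂ hd₂ h => ?_) fun π hπ => ?_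
  · have hd_dvd := Nat.dvd_of_mem_divisors hd
    have hnd : n / d ≠ 0 :=
      (Nat.div_pos (Nat.divisor_le hd) (Nat.pos_of_mem_divisors hd)).ne'
    refine mem_filter.2 ⟨mem_odds.2 fun i hi => ?_, ?_⟩
    · exact Multiset.eq_of_mem_replicate hi ▸ hn.of_dvd_nat hd_dvd
    · simp [Multiset.toFinset_replicate, hnd]
  · have hmem : d₁ ∈ Multiset.replicate (n / d₁) d₁ := Multiset.mem_replicate.2
      ⟨(Nat.div_pos (Nat.divisor_le hd₁) (Nat.pos_of_mem_divisors hd₁)).ne', rfl⟩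
    have hparts : Multiset.replicate (n / d₁) d₁ = Multiset.replicate (n / d₂) d₂ :=
      congrArg Nat.Partition.parts h
    rw [hparts] at hmem
    exact Multiset.eq_of_mem_replicate hmem
  · obtain ⟨a, ha⟩ := card_eq_one.1 (mem_filter.1 hπ).2
    obtain ⟨-, hparts⟩ := (Multiset.toFinset_eq_singleton_iff _ _).1 ha
    rw [Multiset.nsmul_singleton] at hparts
    have hsum : Multiset.card π.parts * a = n := by
      conv_rhs => rw [← π.parts_sum, hparts, Multiset.sum_replicate, smul_eq_mul]
    have ha_pos : 0 < a := π.parts_pos (Multiset.mem_toFinset.1 (ha ▸ mem_singleton_self a))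
    refine ⟨a, Nat.mem_divisors.2 ⟨Dvd.intro_left _ hsum, hn.pos.ne'⟩, Nat.Partition.ext ?_⟩
    change Multiset.replicate (n / a) a = π.parts
    rw [Nat.div_eq_of_eq_mul_left ha_pos hsum.symm, ← hparts]

theorem OPT_zero_right (k : ℕ) : OPT k 0 = 1 := by
  have eq_zero (s : Multiset ℕ) (hs : ∀ x ∈ s, Odd x) (h : s.sum = 0) : s = 0 :=
    Multiset.eq_zero_of_forall_notMem fun x hx =>
      (hs x hx).pos.ne' (Multiset.sum_eq_zero_iff.1 h x hx)
  rw [OPT_eq_card, Nat.card_eq_one_iff_exists]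
  refine ⟨⟨⟨fun _ => (0, 0), fun _ => ⟨Multiset.nodup_zero, by simp, by simp⟩⟩,
    by simp [weight]⟩, ?_⟩
  rintro ⟨⟨f, hf⟩, hw⟩
  refine Subtype.ext <| Subtype.ext <| funext fun i => ?_
  have hi : (f i).1.sum + (f i).2.sum = 0 := sum_eq_zero_iff.1 hw i (mem_univ i)
  exact Prod.ext (eq_zero _ (hf i).2.1 (Nat.add_eq_zero_iff.1 hi).1)
    (eq_zero _ (hf i).2.2 (Nat.add_eq_zero_iff.1 hi).2)

theorem two_dvd_OPT_one {n : ℕ} (hn : n ≠ 0) : 2 ∣ OPT 1 n := by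
  rw [OPT_one]
  refine dvd_sum fun π _ => dvd_pow_self 2 ?_
  exact (Multiset.toFinset_nonempty.2 (π.parts_ne_zero hn)).card_pos.ne'

theorem four_dvd_OPT_two {n : ℕ} (hn : n ≠ 0) : 4 ∣ OPT 2 n := by
  obtain ⟨m, rfl⟩ := Nat.exists_eq_add_one_of_ne_zero hn
  obtain ⟨c, hc⟩ := two_dvd_OPT_one hn
  rw [show 2 = 1 + 1 from rfl, OPT_add, Nat.sum_antidiagonal_eq_sum_range_succ
    (fun a b => OPT 1 a * OPT 1 b), sum_range_succ, sum_range_succ', Nat.sub_zero, Nat.sub_self,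
    OPT_zero_right, one_mul, mul_one, hc, add_assoc]
  refine dvd_add (dvd_sum fun i hi => ?_) ⟨c, by ring⟩
  have hi : i < m := mem_range.1 hi
  exact mul_dvd_mul (two_dvd_OPT_one i.succ_ne_zero) (two_dvd_OPT_one (by omega))

theorem OPT_add_two_modEq (k n : ℕ) : OPT (k + 2) n ≡ OPT k n [MOD 4] := by
  rw [← ZMod.natCast_eq_natCast_iff, OPT_add, Nat.cast_sum,
    sum_eq_single_of_mem (n, 0) (mem_antidiagonal.2 (add_zero n))]
  · simp [OPT_zero_right]
  · rintro ⟨a, b⟩ hab hne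
    have hb : b ≠ 0 := by rintro rfl; simp_all
    rw [Nat.cast_mul, (ZMod.natCast_eq_zero_iff _ 4).2 (four_dvd_OPT_two hb), mul_zero]

theorem OPT_two_mul_add_one_modEq (k n : ℕ) : OPT (2 * k + 1) n ≡ OPT 1 n [MOD 4] := by
  induction k with
  | zero => rfl
  | succ k ih => exact (OPT_add_two_modEq _ n).trans ih

theorem OPT_one_modEq_two_mul_card_divisors {n : ℕ} (hn : Odd n) :
    OPT 1 n ≡ 2 * #n.divisors [MOD 4] := by
  rw [← ZMod.natCast_eq_natCast_iff, OPT_one,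
    ← Nat.Partition.card_filter_odds_card_toFinset_eq_one hn,
    ← sum_filter_add_sum_filter_not _ fun π : n.Partition => #π.parts.toFinset = 1]
  push_cast
  rw [sum_congr rfl fun π hπ => by rw [(mem_filter.1 hπ).2, pow_one], sum_const, nsmul_eq_mul,
    mul_comm, add_eq_left]
  refine sum_eq_zero fun π hπ => ?_
  have h_pos := (Multiset.toFinset_nonempty.2 (π.parts_ne_zero hn.pos.ne')).card_pos
  have h_ne_one := (mem_filter.1 hπ).2
  obtain ⟨j, hj⟩ := Nat.exists_eq_add_of_le' (by omega : 2 ≤ #π.parts.toFinset)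
  rw [hj, pow_add, show (2 : ZMod 4) ^ 2 = 0 by decide, mul_zero]

theorem opt_odd_tuple_nonresidue_mod_four_general (p : ℕ) (hp : p.Prime)
    (r : ℕ) (hnr : ¬ ∃ x : ℤ, x ^ 2 ≡ (r : ℤ) [ZMOD p])
    (R : ℕ) (hR : R = if Odd r then r else p + r)
    (n k : ℕ) :
    OPT (2 * k + 1) (2 * p * n + R) ≡ 0 [MOD 4] := by
  have hp_odd : Odd p := hp.odd_of_ne_two <| by
    rintro rfl
    exact hnr ⟨r, Int.sq_modEq_self_two r⟩
  have hN_modEq : ((2 * p * n + R : ℕ) : ℤ) ≡ r [ZMOD p] := by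
    refine (Int.modEq_iff_dvd.2 ?_).symm
    split_ifs at hR with hr
    · exact ⟨2 * n, by rw [hR]; push_cast; ring⟩
    · exact ⟨2 * n + 1, by rw [hR]; push_cast; ring⟩
  have hN_odd : Odd (2 * p * n + R) := by
    refine ((even_two.mul_right p).mul_right n).add_odd ?_
    split_ifs at hR with hr
    · exact hR ▸ hr
    · exact hR ▸ hp_odd.add_even (Nat.not_odd_iff_even.1 hr)
  have hN_sq : ¬IsSquare (2 * p * n + R) := by
    rintro ⟨m, hm⟩
    exact hnr ⟨m, by rw [sq, ← Nat.cast_mul, ← hm]; exact hN_modEq⟩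
  obtain ⟨c, hc⟩ := Nat.even_card_divisors hN_sq
  calc OPT (2 * k + 1) (2 * p * n + R) ≡ OPT 1 (2 * p * n + R) [MOD 4] :=
        OPT_two_mul_add_one_modEq k _
    _ ≡ 2 * (c + c) [MOD 4] := hc ▸ OPT_one_modEq_two_mul_card_divisors hN_odd
    _ ≡ 0 [MOD 4] := Nat.modEq_zero_iff_dvd.2 ⟨c, by ring⟩

/-- For a prime `p ≥ 5`, a quadratic nonresidue `r` modulo `p` with
`1 ≤ r ≤ p - 1`, and `R = r` if `r` is odd, `R = p + r` if `r` is even,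
we have `OPT_{2k+1}(2pn + R) ≡ 0 (mod 4)` for all `n, k ≥ 0`. -/
theorem opt_odd_tuple_nonresidue_mod_four (p : ℕ) (hp : p.Prime) (hp5 : 5 ≤ p)
    (r : ℕ) (hr1 : 1 ≤ r) (hr2 : r ≤ p - 1)
    (hnr : ¬ ∃ x : ℤ, x ^ 2 ≡ (r : ℤ) [ZMOD p])
    (R : ℕ) (hR : R = if Odd r then r else p + r)
    (n k : ℕ) :
    OPT (2 * k + 1) (2 * p * n + R) ≡ 0 [MOD 4] :=
  opt_odd_tuple_nonresidue_mod_four_general p hp r hnr R hR n k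
end

section
/- For all integers n ≥ 0 and k ≥ 0, the number of overpartition (2k+1)-tuples with odd parts satisfies OPT_{2k+1}(8n+1) ≡ 0 (mod 2). -/
noncomputable def ovMin (p : Multiset ℕ × Multiset ℕ) (h : p.1 + p.2 ≠ 0) : ℕ :=
  (p.1 + p.2).toFinset.min' (Multiset.toFinset_nonempty.mpr h)

lemma ovMin_mem (p : Multiset ℕ × Multiset ℕ) (h : p.1 + p.2 ≠ 0) :
    ovMin p h ∈ p.1 + p.2 := by
  exact Multiset.mem_toFinset.mp ((p.1 + p.2).toFinset.min'_mem _)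

/-- Toggle the overline on the smallest part. -/
noncomputable def ovToggle (p : Multiset ℕ × Multiset ℕ) : Multiset ℕ × Multiset ℕ :=
  if h : p.1 + p.2 = 0 then p else
    if ovMin p h ∈ p.1 then (p.1.erase (ovMin p h), ovMin p h ::ₘ p.2)
    else (ovMin p h ::ₘ p.1, p.2.erase (ovMin p h))

lemma ovToggle_add (p : Multiset ℕ × Multiset ℕ) :
    (ovToggle p).1 + (ovToggle p).2 = p.1 + p.2 := by
  unfold ovToggle
  split
  · rfl
  · next h =>
    have hmem := ovMin_mem p h
    split
    · next h1 =>
      show p.1.erase (ovMin p h) + (ovMin p h ::ₘ p.2) = p.1 + p.2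
      rw [add_comm, Multiset.cons_add, add_comm p.2, ← Multiset.cons_add,
        Multiset.cons_erase h1]
    · next h1 =>
      have h2 : ovMin p h ∈ p.2 := by
        rcases Multiset.mem_add.1 hmem with h' | h'
        · exact absurd h' h1
        · exact h'
      show (ovMin p h ::ₘ p.1) + p.2.erase (ovMin p h) = p.1 + p.2
      rw [Multiset.cons_add, ← Multiset.add_cons, Multiset.cons_erase h2]

lemma ovMin_congr {p q : Multiset ℕ × Multiset ℕ} (hpq : p.1 + p.2 = q.1 + q.2)
    (h : p.1 + p.2 ≠ 0) (h' : q.1 + q.2 ≠ 0) : ovMin p h = ovMin q h' := by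
  unfold ovMin
  congr 1
  rw [hpq]

lemma ovToggle_of_ne (p : Multiset ℕ × Multiset ℕ) (h : p.1 + p.2 ≠ 0) :
    ovToggle p = if ovMin p h ∈ p.1 then (p.1.erase (ovMin p h), ovMin p h ::ₘ p.2)
      else (ovMin p h ::ₘ p.1, p.2.erase (ovMin p h)) := by
  unfold ovToggle; rw [dif_neg h]

lemma ovToggle_ovToggle (p : Multiset ℕ × Multiset ℕ) (hnd : p.1.Nodup) :
    ovToggle (ovToggle p) = p := by
  by_cases h : p.1 + p.2 = 0
  · unfold ovToggle; simp [h]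
  have hmem := ovMin_mem p h
  have hadd := ovToggle_add p
  have h' : (ovToggle p).1 + (ovToggle p).2 ≠ 0 := by rw [hadd]; exact h
  have hm2 : ovMin (ovToggle p) h' = ovMin p h := ovMin_congr hadd h' h
  have h1 := ovToggle_of_ne p h
  have h2 := ovToggle_of_ne (ovToggle p) h'
  rw [hm2] at h2
  set m := ovMin p h with hm
  by_cases hc : m ∈ p.1
  · rw [if_pos hc] at h1
    have hnotin : m ∉ (ovToggle p).1 := by
      rw [h1]; exact hnd.notMem_erase
    rw [if_neg hnotin] at h2
    rw [h2, h1]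
    ext <;> simp [Multiset.cons_erase hc, Multiset.erase_cons_head]
  · rw [if_neg hc] at h1
    have hin : m ∈ (ovToggle p).1 := by rw [h1]; exact Multiset.mem_cons_self _ _
    rw [if_pos hin] at h2
    have h2' : m ∈ p.2 := (Multiset.mem_add.1 hmem).resolve_left hc
    rw [h2, h1]
    ext <;> simp [Multiset.cons_erase h2', Multiset.erase_cons_head]

lemma ovToggle_ne (p : Multiset ℕ × Multiset ℕ) (h : p.1 + p.2 ≠ 0) (hnd : p.1.Nodup) :
    ovToggle p ≠ p := by
  have h1 := ovToggle_of_ne p h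
  set m := ovMin p h with hm
  intro he
  rw [he] at h1
  by_cases hc : m ∈ p.1
  · rw [if_pos hc] at h1
    have : p.1 = p.1.erase m := congrArg Prod.fst h1
    exact hnd.notMem_erase (this ▸ hc)
  · rw [if_neg hc] at h1
    have : p.1 = m ::ₘ p.1 := congrArg Prod.fst h1
    exact hc (this ▸ Multiset.mem_cons_self m p.1)

lemma ovToggle_isOdd (p : Multiset ℕ × Multiset ℕ)
    (hp : p.1.Nodup ∧ (∀ x ∈ p.1, Odd x) ∧ (∀ x ∈ p.2, Odd x)) :
    (ovToggle p).1.Nodup ∧ (∀ x ∈ (ovToggle p).1, Odd x) ∧ (∀ x ∈ (ovToggle p).2, Odd x) := by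
  obtain ⟨hnd, ho1, ho2⟩ := hp
  by_cases h : p.1 + p.2 = 0
  · unfold ovToggle; rw [dif_pos h]; exact ⟨hnd, ho1, ho2⟩
  have hmem := ovMin_mem p h
  have h1 := ovToggle_of_ne p h
  set m := ovMin p h with hm
  have hodd : Odd m := by
    rcases Multiset.mem_add.1 hmem with h'' | h''
    · exact ho1 _ h''
    · exact ho2 _ h''
  by_cases hc : m ∈ p.1
  · rw [if_pos hc] at h1
    rw [h1]
    refine ⟨hnd.erase m, fun x hx => ho1 x (Multiset.mem_of_mem_erase hx), fun x hx => ?_⟩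
    rcases Multiset.mem_cons.1 hx with rfl | hx'
    · exact hodd
    · exact ho2 x hx'
  · rw [if_neg hc] at h1
    rw [h1]
    refine ⟨Multiset.nodup_cons.2 ⟨hc, hnd⟩, fun x hx => ?_,
      fun x hx => ho2 x (Multiset.mem_of_mem_erase hx)⟩
    rcases Multiset.mem_cons.1 hx with rfl | hx'
    · exact hodd
    · exact ho1 x hx'

lemma even_ncard_of_involution {α : Type*} (s : Set α) (g : α → α)
    (hmem : ∀ x ∈ s, g x ∈ s) (hinv : ∀ x ∈ s, g (g x) = x) (hne : ∀ x ∈ s, g x ≠ x) :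
    s.ncard % 2 = 0 := by
  by_cases hfin : s.Finite
  · classical
    rw [Set.ncard_eq_toFinset_card s hfin]
    have key : (∑ _x ∈ hfin.toFinset, (1 : ZMod 2)) = 0 := by
      refine Finset.sum_involution (fun a ha => g a) (fun a ha => ?_) (fun a ha _ => ?_)
        (fun a ha => ?_) (fun a ha => ?_)
      · decide
      · exact hne a (hfin.mem_toFinset.1 ha)
      · exact hfin.mem_toFinset.2 (hmem a (hfin.mem_toFinset.1 ha))
      · exact hinv a (hfin.mem_toFinset.1 ha)
    rw [Finset.sum_const, nsmul_eq_mul, mul_one] at key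
    have h2 : (2 : ℕ) ∣ hfin.toFinset.card := by
      exact_mod_cast (ZMod.natCast_eq_zero_iff _ 2).1 key
    omega
  · rw [Set.Infinite.ncard hfin]

noncomputable def ovIdx {k : ℕ} (f : Fin k → Multiset ℕ × Multiset ℕ)
    (h : (Finset.univ.filter (fun i => (f i).1 + (f i).2 ≠ 0)).Nonempty) : Fin k :=
  (Finset.univ.filter (fun i => (f i).1 + (f i).2 ≠ 0)).min' h

noncomputable def ovT {k : ℕ} (f : Fin k → Multiset ℕ × Multiset ℕ) :
    Fin k → Multiset ℕ × Multiset ℕ :=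
  if h : (Finset.univ.filter (fun i => (f i).1 + (f i).2 ≠ 0)).Nonempty then
    Function.update f (ovIdx f h) (ovToggle (f (ovIdx f h)))
  else f

lemma ovIdx_mem {k : ℕ} (f : Fin k → Multiset ℕ × Multiset ℕ)
    (h : (Finset.univ.filter (fun i => (f i).1 + (f i).2 ≠ 0)).Nonempty) :
    (f (ovIdx f h)).1 + (f (ovIdx f h)).2 ≠ 0 := by
  have := (Finset.univ.filter (fun i => (f i).1 + (f i).2 ≠ 0)).min'_mem h
  simpa [ovIdx, Finset.mem_filter] using this

lemma ovT_of_ne {k : ℕ} (f : Fin k → Multiset ℕ × Multiset ℕ)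
    (h : (Finset.univ.filter (fun i => (f i).1 + (f i).2 ≠ 0)).Nonempty) :
    ovT f = Function.update f (ovIdx f h) (ovToggle (f (ovIdx f h))) := by
  unfold ovT; rw [dif_pos h]

lemma ovT_add {k : ℕ} (f : Fin k → Multiset ℕ × Multiset ℕ) (i : Fin k) :
    ((ovT f) i).1 + ((ovT f) i).2 = (f i).1 + (f i).2 := by
  unfold ovT
  split
  · next h =>
    rcases eq_or_ne i (ovIdx f h) with rfl | hne
    · rw [Function.update_self]
      exact ovToggle_add _
    · rw [Function.update_of_ne hne]
  · rfl

lemma ovT_filter_eq {k : ℕ} (f : Fin k → Multiset ℕ × Multiset ℕ) :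
    (Finset.univ.filter (fun i => ((ovT f) i).1 + ((ovT f) i).2 ≠ 0)) =
    (Finset.univ.filter (fun i => (f i).1 + (f i).2 ≠ 0)) := by
  apply Finset.filter_congr
  intro i _
  rw [ovT_add]

lemma ovT_ovT {k : ℕ} (f : Fin k → Multiset ℕ × Multiset ℕ)
    (hnd : ∀ i, (f i).1.Nodup) : ovT (ovT f) = f := by
  by_cases h : (Finset.univ.filter (fun i => (f i).1 + (f i).2 ≠ 0)).Nonempty
  · have h' : (Finset.univ.filter (fun i => ((ovT f) i).1 + ((ovT f) i).2 ≠ 0)).Nonempty := by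
      rw [ovT_filter_eq]; exact h
    have hidx : ovIdx (ovT f) h' = ovIdx f h := by
      unfold ovIdx
      congr 1
      exact ovT_filter_eq f
    rw [ovT_of_ne (ovT f) h', hidx, ovT_of_ne f h]
    have hval : (Function.update f (ovIdx f h) (ovToggle (f (ovIdx f h)))) (ovIdx f h) =
        ovToggle (f (ovIdx f h)) := Function.update_self _ _ _
    rw [hval, Function.update_idem, ovToggle_ovToggle _ (hnd _), Function.update_eq_self]
  · have h1 : ovT f = f := by unfold ovT; rw [dif_neg h]
    rw [h1, h1]
/-- For all `n ≥ 0` and `k ≥ 0`, `OPT_{2k+1}(8n+1) ≡ 0 (mod 2)`. -/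
theorem opt_odd_tuple_8n_plus_1 (n k : ℕ) :
    OPT (2 * k + 1) (8 * n + 1) ≡ 0 [MOD 2] := by
  show OPT (2 * k + 1) (8 * n + 1) % 2 = 0 % 2
  rw [Nat.zero_mod]
  unfold OPT
  set S : Set (Fin (2 * k + 1) → Multiset ℕ × Multiset ℕ) :=
    {f | (∀ i, IsOddOverpartition (f i)) ∧ (∑ i, ((f i).1.sum + (f i).2.sum)) = 8 * n + 1}
    with hS
  -- for f ∈ S, the filter of nonempty coordinates is nonempty
  have hfil : ∀ f ∈ S, (Finset.univ.filter
      (fun i => (f i).1 + (f i).2 ≠ 0)).Nonempty := by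
    intro f hf
    by_contra hemp
    rw [Finset.not_nonempty_iff_eq_empty, Finset.filter_eq_empty_iff] at hemp
    have : (∑ i, ((f i).1.sum + (f i).2.sum)) = 0 := by
      apply Finset.sum_eq_zero
      intro i _
      have h0 : (f i).1 + (f i).2 = 0 := by
        by_contra hne
        exact hemp (Finset.mem_univ i) hne
      rw [← Multiset.sum_add, h0, Multiset.sum_zero]
    rw [hf.2] at this
    omega
  apply even_ncard_of_involution S ovT
  · -- maps S to S
    rintro f ⟨hop, hsum⟩
    constructor
    · intro i
      have h := hfil f ⟨hop, hsum⟩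
      rw [ovT_of_ne f h]
      rcases eq_or_ne i (ovIdx f h) with rfl | hne
      · rw [Function.update_self]
        exact ovToggle_isOdd _ (hop _)
      · rw [Function.update_of_ne hne]
        exact hop i
    · rw [← hsum]
      apply Finset.sum_congr rfl
      intro i _
      have := ovT_add f i
      have e1 : ((ovT f) i).1.sum + ((ovT f) i).2.sum = (((ovT f) i).1 + ((ovT f) i).2).sum := by
        rw [Multiset.sum_add]
      have e2 : (f i).1.sum + (f i).2.sum = ((f i).1 + (f i).2).sum := by
        rw [Multiset.sum_add]
      rw [e1, e2, this]
  · -- involutive on S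
    rintro f ⟨hop, hsum⟩
    exact ovT_ovT f (fun i => (hop i).1)
  · -- no fixed points
    rintro f ⟨hop, hsum⟩
    have h := hfil f ⟨hop, hsum⟩
    intro he
    have : (ovT f) (ovIdx f h) = f (ovIdx f h) := by rw [he]
    rw [ovT_of_ne f h, Function.update_self] at this
    exact ovToggle_ne _ (ovIdx_mem f h) (hop _).1 this
end

section
/- For all integers n ≥ 0 and k ≥ 0, the number of overpartition (2k+1)-tuples with odd parts satisfies OPT_{2k+1}(8n+3) ≡ 0 (mod 4). -/
namespace OPTAux

/-- Even cardinality from a fixed-point-free involution. -/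
lemma even_card_of_involution {α : Type*} [DecidableEq α] (s : Finset α) (g : α → α)
    (hmem : ∀ x ∈ s, g x ∈ s) (hinv : ∀ x ∈ s, g (g x) = x) (hne : ∀ x ∈ s, g x ≠ x) :
    Even s.card := by
  classical
  suffices H : ∀ n (s : Finset α), s.card = n → (∀ x ∈ s, g x ∈ s) →
      (∀ x ∈ s, g (g x) = x) → (∀ x ∈ s, g x ≠ x) → Even s.card from
    H s.card s rfl hmem hinv hne
  intro n
  induction n using Nat.strong_induction_on with
  | _ n ih =>
    intro s hcard hmem hinv hne
    rcases s.eq_empty_or_nonempty with rfl | ⟨x, hx⟩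
    · simp
    · have hgx : g x ∈ s := hmem x hx
      have hxne : g x ≠ x := hne x hx
      set t := (s.erase x).erase (g x) with ht
      have hgxt : g x ∈ s.erase x := Finset.mem_erase.2 ⟨hxne, hgx⟩
      have hct : t.card + 2 = s.card := by
        rw [ht, Finset.card_erase_of_mem hgxt, Finset.card_erase_of_mem hx]
        have h1 : 1 ≤ s.card := Finset.card_pos.2 ⟨x, hx⟩
        have h2 : 2 ≤ s.card := by
          have : ({x, g x} : Finset α) ⊆ s := by
            intro y hy
            rcases Finset.mem_insert.1 hy with rfl | hy
            · exact hx
            · rw [Finset.mem_singleton.1 hy]; exact hgx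
          have := Finset.card_le_card this
          rwa [Finset.card_insert_of_notMem (by simp [Ne.symm hxne]),
            Finset.card_singleton] at this
        omega
      have hmem' : ∀ y ∈ t, y ∈ s := by
        intro y hy
        exact Finset.mem_of_mem_erase (Finset.mem_of_mem_erase hy)
      have hsub : ∀ y ∈ t, g y ∈ t := by
        intro y hy
        have hys : y ∈ s := hmem' y hy
        have hy1 : y ≠ g x := (Finset.mem_erase.1 hy).1
        have hy2 : y ≠ x := (Finset.mem_erase.1 (Finset.mem_of_mem_erase hy)).1
        refine Finset.mem_erase.2 ⟨?_, Finset.mem_erase.2 ⟨?_, hmem y hys⟩⟩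
        · intro h; exact hy2 (by rw [← hinv y hys, h, hinv x hx])
        · intro h; exact hy1 (by rw [← hinv y hys, h])
      have : Even t.card := by
        refine ih t.card (by omega) t rfl hsub ?_ ?_
        · intro y hy; exact hinv y (hmem' y hy)
        · intro y hy; exact hne y (hmem' y hy)
      rw [← hct]
      rcases this with ⟨d, hd⟩
      exact ⟨d + 1, by omega⟩

/-- Toggle the overline status of value `v` in an overpartition `p`. -/
def tog (p : Multiset ℕ × Multiset ℕ) (v : ℕ) : Multiset ℕ × Multiset ℕ :=
  if v ∈ p.1 then (p.1.erase v, v ::ₘ p.2) else (v ::ₘ p.1, p.2.erase v)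

lemma tog_union {p : Multiset ℕ × Multiset ℕ} {v : ℕ} (hv : v ∈ p.1 + p.2) :
    (tog p v).1 + (tog p v).2 = p.1 + p.2 := by
  unfold tog
  split_ifs with h
  · show p.1.erase v + (v ::ₘ p.2) = p.1 + p.2
    rw [Multiset.add_cons, ← Multiset.cons_add, Multiset.cons_erase h]
  · have hv2 : v ∈ p.2 := by
      rcases Multiset.mem_add.1 hv with h' | h'
      · exact absurd h' h
      · exact h'
    show (v ::ₘ p.1) + p.2.erase v = p.1 + p.2
    rw [Multiset.cons_add, ← Multiset.add_cons, Multiset.cons_erase hv2]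

lemma tog_mem_fst {p : Multiset ℕ × Multiset ℕ} {v : ℕ} (hd : p.1.Nodup) :
    v ∈ (tog p v).1 ↔ v ∉ p.1 := by
  unfold tog
  split_ifs with h
  · simp [hd.notMem_erase, h]
  · simp [h]

lemma tog_tog {p : Multiset ℕ × Multiset ℕ} {v : ℕ} (hd : p.1.Nodup)
    (hv : v ∈ p.1 + p.2) : tog (tog p v) v = p := by
  by_cases h : v ∈ p.1
  · have h1 : tog p v = (p.1.erase v, v ::ₘ p.2) := if_pos h
    have h2 : v ∉ (tog p v).1 := by rw [h1]; exact hd.notMem_erase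
    rw [tog, if_neg h2, h1]
    simp [Multiset.cons_erase h, Multiset.erase_cons_head]
  · have hv2 : v ∈ p.2 := by
      rcases Multiset.mem_add.1 hv with h' | h'
      · exact absurd h' h
      · exact h'
    have h1 : tog p v = (v ::ₘ p.1, p.2.erase v) := if_neg h
    have h2 : v ∈ (tog p v).1 := by rw [h1]; exact Multiset.mem_cons_self v p.1
    rw [tog, if_pos h2, h1]
    simp [Multiset.erase_cons_head, Multiset.cons_erase hv2]

lemma tog_nodup {p : Multiset ℕ × Multiset ℕ} {v : ℕ} (hd : p.1.Nodup) :
    (tog p v).1.Nodup := by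
  unfold tog
  split_ifs with h
  · exact hd.erase v
  · exact Multiset.nodup_cons.2 ⟨h, hd⟩

lemma tog_odd {p : Multiset ℕ × Multiset ℕ} {v : ℕ} (h1 : ∀ x ∈ p.1, Odd x)
    (h2 : ∀ x ∈ p.2, Odd x) (hv : Odd v) :
    (∀ x ∈ (tog p v).1, Odd x) ∧ (∀ x ∈ (tog p v).2, Odd x) := by
  unfold tog
  split_ifs with h
  · refine ⟨fun x hx => h1 x (Multiset.mem_of_mem_erase hx), fun x hx => ?_⟩
    rcases Multiset.mem_cons.1 hx with rfl | hx
    · exact hv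
    · exact h2 x hx
  · refine ⟨fun x hx => ?_, fun x hx => h2 x (Multiset.mem_of_mem_erase hx)⟩
    rcases Multiset.mem_cons.1 hx with rfl | hx
    · exact hv
    · exact h1 x hx

section Tuples

variable {m : ℕ}

/-- The multiset of all parts of component `i`. -/
def C (f : Fin (m + 1) → Multiset ℕ × Multiset ℕ) (i : Fin (m + 1)) : Multiset ℕ :=
  (f i).1 + (f i).2

/-- The multiset of all parts of the tuple. -/
def U (f : Fin (m + 1) → Multiset ℕ × Multiset ℕ) : Multiset ℕ := ∑ i, C f i

noncomputable def vmax (f : Fin (m + 1) → Multiset ℕ × Multiset ℕ) : ℕ :=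
  if h : (U f).toFinset.Nonempty then (U f).toFinset.max' h else 0

noncomputable def vmin (f : Fin (m + 1) → Multiset ℕ × Multiset ℕ) : ℕ :=
  if h : (U f).toFinset.Nonempty then (U f).toFinset.min' h else 0

/-- The indices whose component contains the value `v`. -/
def idx (f : Fin (m + 1) → Multiset ℕ × Multiset ℕ) (v : ℕ) : Finset (Fin (m + 1)) :=
  Finset.univ.filter (fun i => v ∈ C f i)

noncomputable def imax (f : Fin (m + 1) → Multiset ℕ × Multiset ℕ) : Fin (m + 1) :=
  if h : (idx f (vmax f)).Nonempty then (idx f (vmax f)).max' h else 0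

noncomputable def imin (f : Fin (m + 1) → Multiset ℕ × Multiset ℕ) : Fin (m + 1) :=
  if h : (idx f (vmin f)).Nonempty then (idx f (vmin f)).min' h else 0

/-- Toggle value `v` in component `i`. -/
def tgl (f : Fin (m + 1) → Multiset ℕ × Multiset ℕ) (i : Fin (m + 1)) (v : ℕ) :
    Fin (m + 1) → Multiset ℕ × Multiset ℕ :=
  Function.update f i (tog (f i) v)

lemma U_congr {f g : Fin (m + 1) → Multiset ℕ × Multiset ℕ}
    (h : ∀ i, C f i = C g i) : U f = U g :=
  Finset.sum_congr rfl (fun i _ => h i)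

lemma vmax_congr {f g : Fin (m + 1) → Multiset ℕ × Multiset ℕ}
    (h : U f = U g) : vmax f = vmax g := by simp only [vmax, h]

lemma vmin_congr {f g : Fin (m + 1) → Multiset ℕ × Multiset ℕ}
    (h : U f = U g) : vmin f = vmin g := by simp only [vmin, h]

lemma idx_congr {f g : Fin (m + 1) → Multiset ℕ × Multiset ℕ}
    (h : ∀ i, C f i = C g i) (v : ℕ) : idx f v = idx g v := by
  unfold idx; ext i; simp [h i]

lemma imax_congr {f g : Fin (m + 1) → Multiset ℕ × Multiset ℕ}
    (h : ∀ i, C f i = C g i) : imax f = imax g := by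
  simp only [imax, idx_congr h, vmax_congr (U_congr h)]

lemma imin_congr {f g : Fin (m + 1) → Multiset ℕ × Multiset ℕ}
    (h : ∀ i, C f i = C g i) : imin f = imin g := by
  simp only [imin, idx_congr h, vmin_congr (U_congr h)]

lemma C_tgl {f : Fin (m + 1) → Multiset ℕ × Multiset ℕ} {i : Fin (m + 1)} {v : ℕ}
    (hv : v ∈ C f i) (j : Fin (m + 1)) : C (tgl f i v) j = C f j := by
  unfold tgl C
  rcases eq_or_ne j i with rfl | hji
  · rw [Function.update_self]; exact tog_union hv
  · rw [Function.update_of_ne hji]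

lemma mem_U {f : Fin (m + 1) → Multiset ℕ × Multiset ℕ} {a : ℕ} :
    a ∈ U f ↔ ∃ i, a ∈ C f i := by
  rw [U, Multiset.mem_sum]
  simp

/-- The set counted by `OPT (m+1) N`. -/
def Sset (m N : ℕ) : Set (Fin (m + 1) → Multiset ℕ × Multiset ℕ) :=
  {f | (∀ i, (f i).1.Nodup ∧ (∀ x ∈ (f i).1, Odd x) ∧ (∀ x ∈ (f i).2, Odd x)) ∧
    (∑ i, ((f i).1.sum + (f i).2.sum)) = N}

lemma sum_U (f : Fin (m + 1) → Multiset ℕ × Multiset ℕ) :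
    (U f).sum = ∑ i, ((f i).1.sum + (f i).2.sum) := by
  rw [U]
  have := map_sum (Multiset.sumAddMonoidHom : Multiset ℕ →+ ℕ) (fun i => C f i) (Finset.univ : Finset (Fin (m+1)))
  rw [Multiset.coe_sumAddMonoidHom] at this
  rw [this]
  exact Finset.sum_congr rfl (fun i _ => Multiset.sum_add _ _)

lemma odd_of_mem_U {f : Fin (m + 1) → Multiset ℕ × Multiset ℕ} {N : ℕ}
    (hf : f ∈ Sset m N) {a : ℕ} (ha : a ∈ U f) : Odd a := by
  obtain ⟨i, hi⟩ := mem_U.1 ha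
  rcases Multiset.mem_add.1 hi with h | h
  · exact (hf.1 i).2.1 a h
  · exact (hf.1 i).2.2 a h

lemma U_ne {f : Fin (m + 1) → Multiset ℕ × Multiset ℕ} {N : ℕ}
    (hf : f ∈ Sset m N) (hN : N ≠ 0) : U f ≠ 0 := by
  intro h
  apply hN
  rw [← hf.2, ← sum_U, h, Multiset.sum_zero]

lemma vmax_mem {f : Fin (m + 1) → Multiset ℕ × Multiset ℕ} (hne : U f ≠ 0) :
    vmax f ∈ U f := by
  rw [vmax, dif_pos (Multiset.toFinset_nonempty.2 hne)]
  exact Multiset.mem_toFinset.1 (Finset.max'_mem _ _)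

lemma le_vmax {f : Fin (m + 1) → Multiset ℕ × Multiset ℕ} (hne : U f ≠ 0)
    {a : ℕ} (ha : a ∈ U f) : a ≤ vmax f := by
  rw [vmax, dif_pos (Multiset.toFinset_nonempty.2 hne)]
  exact Finset.le_max' _ a (Multiset.mem_toFinset.2 ha)

lemma vmin_mem {f : Fin (m + 1) → Multiset ℕ × Multiset ℕ} (hne : U f ≠ 0) :
    vmin f ∈ U f := by
  rw [vmin, dif_pos (Multiset.toFinset_nonempty.2 hne)]
  exact Multiset.mem_toFinset.1 (Finset.min'_mem _ _)

lemma vmin_le {f : Fin (m + 1) → Multiset ℕ × Multiset ℕ} (hne : U f ≠ 0)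
    {a : ℕ} (ha : a ∈ U f) : vmin f ≤ a := by
  rw [vmin, dif_pos (Multiset.toFinset_nonempty.2 hne)]
  exact Finset.min'_le _ a (Multiset.mem_toFinset.2 ha)

lemma idx_max_nonempty {f : Fin (m + 1) → Multiset ℕ × Multiset ℕ} (hne : U f ≠ 0) :
    (idx f (vmax f)).Nonempty := by
  obtain ⟨i, hi⟩ := mem_U.1 (vmax_mem hne)
  exact ⟨i, by simp [idx, hi]⟩

lemma idx_min_nonempty {f : Fin (m + 1) → Multiset ℕ × Multiset ℕ} (hne : U f ≠ 0) :
    (idx f (vmin f)).Nonempty := by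
  obtain ⟨i, hi⟩ := mem_U.1 (vmin_mem hne)
  exact ⟨i, by simp [idx, hi]⟩

lemma vmax_mem_C {f : Fin (m + 1) → Multiset ℕ × Multiset ℕ} (hne : U f ≠ 0) :
    vmax f ∈ C f (imax f) := by
  rw [imax, dif_pos (idx_max_nonempty hne)]
  have := Finset.max'_mem (idx f (vmax f)) (idx_max_nonempty hne)
  simpa [idx] using this

lemma vmin_mem_C {f : Fin (m + 1) → Multiset ℕ × Multiset ℕ} (hne : U f ≠ 0) :
    vmin f ∈ C f (imin f) := by
  rw [imin, dif_pos (idx_min_nonempty hne)]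
  have := Finset.min'_mem (idx f (vmin f)) (idx_min_nonempty hne)
  simpa [idx] using this

lemma le_imax {f : Fin (m + 1) → Multiset ℕ × Multiset ℕ} (hne : U f ≠ 0)
    {j : Fin (m + 1)} (hj : vmax f ∈ C f j) : j ≤ imax f := by
  rw [imax, dif_pos (idx_max_nonempty hne)]
  exact Finset.le_max' _ j (by simp [idx, hj])

lemma imin_le {f : Fin (m + 1) → Multiset ℕ × Multiset ℕ} (hne : U f ≠ 0)
    {j : Fin (m + 1)} (hj : vmin f ∈ C f j) : imin f ≤ j := by
  rw [imin, dif_pos (idx_min_nonempty hne)]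
  exact Finset.min'_le _ j (by simp [idx, hj])

lemma tgl_mem_Sset {f : Fin (m + 1) → Multiset ℕ × Multiset ℕ} {N : ℕ}
    (hf : f ∈ Sset m N) {i : Fin (m + 1)} {v : ℕ} (hv : v ∈ C f i) :
    tgl f i v ∈ Sset m N := by
  have hvodd : Odd v := odd_of_mem_U hf (mem_U.2 ⟨i, hv⟩)
  constructor
  · intro j
    rcases eq_or_ne j i with rfl | hji
    · rw [tgl, Function.update_self]
      obtain ⟨ho1, ho2⟩ := tog_odd (hf.1 j).2.1 (hf.1 j).2.2 hvodd
      exact ⟨tog_nodup (hf.1 j).1, ho1, ho2⟩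
    · rw [tgl, Function.update_of_ne hji]
      exact hf.1 j
  · rw [← sum_U, U_congr (fun j => C_tgl hv j), sum_U]
    exact hf.2

/-- Toggle the overline of the maximal part (in the largest component containing it). -/
noncomputable def sigma (f : Fin (m + 1) → Multiset ℕ × Multiset ℕ) :
    Fin (m + 1) → Multiset ℕ × Multiset ℕ := tgl f (imax f) (vmax f)

/-- Toggle the overline of the minimal part (in the smallest component containing it). -/
noncomputable def tau (f : Fin (m + 1) → Multiset ℕ × Multiset ℕ) :
    Fin (m + 1) → Multiset ℕ × Multiset ℕ := tgl f (imin f) (vmin f)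

/-- The maximal part is overlined. -/
def pOv (f : Fin (m + 1) → Multiset ℕ × Multiset ℕ) : Prop :=
  vmax f ∈ (f (imax f)).1

lemma sigma_C {f : Fin (m + 1) → Multiset ℕ × Multiset ℕ} (hne : U f ≠ 0) (j : Fin (m + 1)) :
    C (sigma f) j = C f j := C_tgl (vmax_mem_C hne) j

lemma tau_C {f : Fin (m + 1) → Multiset ℕ × Multiset ℕ} (hne : U f ≠ 0) (j : Fin (m + 1)) :
    C (tau f) j = C f j := C_tgl (vmin_mem_C hne) j

lemma sigma_mem {f : Fin (m + 1) → Multiset ℕ × Multiset ℕ} {N : ℕ}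
    (hf : f ∈ Sset m N) (hne : U f ≠ 0) : sigma f ∈ Sset m N :=
  tgl_mem_Sset hf (vmax_mem_C hne)

lemma tau_mem {f : Fin (m + 1) → Multiset ℕ × Multiset ℕ} {N : ℕ}
    (hf : f ∈ Sset m N) (hne : U f ≠ 0) : tau f ∈ Sset m N :=
  tgl_mem_Sset hf (vmin_mem_C hne)

lemma sigma_sigma {f : Fin (m + 1) → Multiset ℕ × Multiset ℕ} {N : ℕ}
    (hf : f ∈ Sset m N) (hne : U f ≠ 0) : sigma (sigma f) = f := by
  have hC := sigma_C hne
  have h1 : imax (sigma f) = imax f := imax_congr hC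
  have h2 : vmax (sigma f) = vmax f := vmax_congr (U_congr hC)
  rw [sigma, h1, h2, sigma, tgl, tgl,
    Function.update_self, Function.update_idem, tog_tog (hf.1 (imax f)).1 (vmax_mem_C hne),
    Function.update_eq_self]

lemma tau_tau {f : Fin (m + 1) → Multiset ℕ × Multiset ℕ} {N : ℕ}
    (hf : f ∈ Sset m N) (hne : U f ≠ 0) : tau (tau f) = f := by
  have hC := tau_C hne
  have h1 : imin (tau f) = imin f := imin_congr hC
  have h2 : vmin (tau f) = vmin f := vmin_congr (U_congr hC)
  rw [tau, h1, h2, tau, tgl, tgl,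
    Function.update_self, Function.update_idem, tog_tog (hf.1 (imin f)).1 (vmin_mem_C hne),
    Function.update_eq_self]

lemma pOv_sigma {f : Fin (m + 1) → Multiset ℕ × Multiset ℕ} {N : ℕ}
    (hf : f ∈ Sset m N) (hne : U f ≠ 0) : pOv (sigma f) ↔ ¬ pOv f := by
  have hC := sigma_C hne
  rw [pOv, pOv, imax_congr hC, vmax_congr (U_congr hC), sigma, tgl, Function.update_self]
  exact tog_mem_fst (hf.1 (imax f)).1

variable {N : ℕ}

/-- The canonical tuple: `c` copies of the value `v` in component `i`, with the
(last) copy of `v` overlined. -/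
def canF (v c : ℕ) (i : Fin (m + 1)) : Fin (m + 1) → Multiset ℕ × Multiset ℕ :=
  fun j => if j = i then ({v}, Multiset.replicate (c - 1) v) else (0, 0)

lemma canF_C (v : ℕ) {c : ℕ} (hc : 0 < c) (i j : Fin (m + 1)) :
    C (canF v c i) j = if j = i then Multiset.replicate c v else 0 := by
  unfold C canF
  rcases eq_or_ne j i with rfl | hji
  · simp only [if_pos rfl]
    show {v} + Multiset.replicate (c - 1) v = Multiset.replicate c v
    rw [← Multiset.replicate_one, ← Multiset.replicate_add]
    congr 1
    omega
  · simp [hji]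

lemma canF_U (v : ℕ) {c : ℕ} (hc : 0 < c) (i : Fin (m + 1)) :
    U (canF v c i) = Multiset.replicate c v := by
  rw [U, Finset.sum_eq_single i]
  · rw [canF_C v hc, if_pos rfl]
  · intro j _ hji
    rw [canF_C v hc, if_neg hji]
  · intro h
    exact absurd (Finset.mem_univ i) h

lemma canF_vmax (v : ℕ) {c : ℕ} (hc : 0 < c) (i : Fin (m + 1)) :
    vmax (canF v c i) = v := by
  rw [vmax, canF_U v hc]
  rw [Multiset.toFinset_replicate, if_neg (by omega)]
  rw [dif_pos (Finset.singleton_nonempty v)]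
  exact Finset.max'_singleton v

lemma canF_vmin (v : ℕ) {c : ℕ} (hc : 0 < c) (i : Fin (m + 1)) :
    vmin (canF v c i) = v := by
  rw [vmin, canF_U v hc]
  rw [Multiset.toFinset_replicate, if_neg (by omega)]
  rw [dif_pos (Finset.singleton_nonempty v)]
  exact Finset.min'_singleton v

lemma canF_idx (v : ℕ) {c : ℕ} (hc : 0 < c) (i : Fin (m + 1)) :
    idx (canF v c i) v = {i} := by
  ext j
  rw [idx, Finset.mem_filter]
  rcases eq_or_ne j i with rfl | hji
  · simp [canF_C v hc, Multiset.mem_replicate, hc.ne']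
  · simp [canF_C v hc, hji]

lemma canF_imax (v : ℕ) {c : ℕ} (hc : 0 < c) (i : Fin (m + 1)) :
    imax (canF v c i) = i := by
  rw [imax]
  have h1 : idx (canF v c i) (vmax (canF v c i)) = {i} := by
    rw [canF_vmax v hc, canF_idx v hc]
  rw [dif_pos (h1 ▸ Finset.singleton_nonempty i)]
  simp [h1]

lemma canF_imin (v : ℕ) {c : ℕ} (hc : 0 < c) (i : Fin (m + 1)) :
    imin (canF v c i) = i := by
  rw [imin]
  have h1 : idx (canF v c i) (vmin (canF v c i)) = {i} := by
    rw [canF_vmin v hc, canF_idx v hc]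
  rw [dif_pos (h1 ▸ Finset.singleton_nonempty i)]
  simp [h1]

lemma canF_mem {v c : ℕ} (hvodd : Odd v) (hc : 0 < c) (hvc : v * c = N)
    (i : Fin (m + 1)) : canF v c i ∈ Sset m N := by
  constructor
  · intro j
    unfold canF
    rcases eq_or_ne j i with rfl | hji
    · simp only [if_pos rfl]
      refine ⟨Multiset.nodup_singleton v, ?_, ?_⟩
      · intro x hx; rw [Multiset.mem_singleton.1 hx]; exact hvodd
      · intro x hx; rw [Multiset.eq_of_mem_replicate hx]; exact hvodd
    · simp [hji]
  · rw [Finset.sum_eq_single i]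
    · unfold canF
      rw [if_pos rfl]
      show Multiset.sum {v} + (Multiset.replicate (c - 1) v).sum = N
      rw [Multiset.sum_singleton, Multiset.sum_replicate, smul_eq_mul, ← hvc]
      have : 1 + (c - 1) = c := by omega
      calc v + (c - 1) * v = (1 + (c - 1)) * v := by ring
        _ = c * v := by rw [this]
        _ = v * c := by ring
    · intro j _ hji
      unfold canF
      rw [if_neg hji]
      simp
    · intro h
      exact absurd (Finset.mem_univ i) h

lemma canF_pOv (v : ℕ) {c : ℕ} (hc : 0 < c) (i : Fin (m + 1)) :
    pOv (canF v c i) := by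
  rw [pOv, canF_vmax v hc, canF_imax v hc, canF]
  simp

/-- The "single colored value" case: all parts are equal and in the same component. -/
def scase (f : Fin (m + 1) → Multiset ℕ × Multiset ℕ) : Prop :=
  vmin f = vmax f ∧ imin f = imax f

lemma struct {f : Fin (m + 1) → Multiset ℕ × Multiset ℕ}
    (hf : f ∈ Sset m N) (hne : U f ≠ 0) (hs : scase f) (hp : pOv f) :
    0 < vmax f ∧ vmax f ∣ N ∧ f = canF (vmax f) (N / vmax f) (imax f) := by
  set v := vmax f with hv
  set i := imax f with hi
  have hvodd : Odd v := odd_of_mem_U hf (vmax_mem hne)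
  have hvpos : 0 < v := hvodd.pos
  -- every part equals v
  have hall : ∀ a ∈ U f, a = v := by
    intro a ha
    have h1 := le_vmax hne ha
    have h2 := vmin_le hne ha
    rw [hs.1] at h2
    omega
  -- every nonempty component is component i
  have hidx : ∀ j : Fin (m + 1), C f j ≠ 0 → j = i := by
    intro j hj
    obtain ⟨a, ha⟩ := Multiset.exists_mem_of_ne_zero hj
    have hav : a = v := hall a (mem_U.2 ⟨j, ha⟩)
    have h1 : j ≤ i := le_imax hne (by rw [← hv, ← hav]; exact ha)
    have h2 : i ≤ j := by
      have := imin_le hne (f := f) (j := j) (by rw [hs.1, ← hv, ← hav]; exact ha)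
      rwa [hs.2, ← hi] at this
    exact le_antisymm h1 h2
  have hCzero : ∀ j : Fin (m + 1), j ≠ i → f j = (0, 0) := by
    intro j hji
    by_contra hne'
    have : C f j ≠ 0 := by
      intro h0
      apply hne'
      have h1 : Multiset.card (f j).1 + Multiset.card (f j).2 = 0 := by
        rw [← Multiset.card_add]
        show Multiset.card (C f j) = 0
        rw [h0, Multiset.card_zero]
      have e1 : (f j).1 = 0 := Multiset.card_eq_zero.1 (by omega)
      have e2 : (f j).2 = 0 := Multiset.card_eq_zero.1 (by omega)
      exact Prod.ext e1 e2
    exact hji (hidx j this)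
  -- component i
  have hD : (f i).1 = {v} := by
    have hmemD : v ∈ (f i).1 := hp
    have hallD : ∀ b ∈ (f i).1, b = v := by
      intro b hb
      exact hall b (mem_U.2 ⟨i, Multiset.mem_add.2 (Or.inl hb)⟩)
    have hrep : (f i).1 = Multiset.replicate (Multiset.card (f i).1) v :=
      Multiset.eq_replicate_card.2 hallD
    have hcard : Multiset.card (f i).1 = 1 := by
      have := Multiset.count_eq_one_of_mem (hf.1 i).1 hmemD
      rw [hrep, Multiset.count_replicate, if_pos rfl] at this
      exact this
    rw [hrep, hcard, Multiset.replicate_one]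
  have hM : (f i).2 = Multiset.replicate (Multiset.card (f i).2) v := by
    refine Multiset.eq_replicate_card.2 ?_
    intro b hb
    exact hall b (mem_U.2 ⟨i, Multiset.mem_add.2 (Or.inr hb)⟩)
  -- the sum
  have hsum : v * (Multiset.card (f i).2 + 1) = N := by
    have h0 := hf.2
    rw [Finset.sum_eq_single i] at h0
    · rw [hD, hM, Multiset.sum_singleton, Multiset.sum_replicate, smul_eq_mul] at h0
      rw [← h0]; ring
    · intro j _ hji
      rw [hCzero j hji]
      simp
    · intro h; exact absurd (Finset.mem_univ i) h
  have hdvd : v ∣ N := Dvd.intro _ hsum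
  have hdivv : N / v = Multiset.card (f i).2 + 1 := by
    rw [← hsum, Nat.mul_div_cancel_left _ hvpos]
  refine ⟨hvpos, hdvd, ?_⟩
  funext j
  rcases eq_or_ne j i with rfl | hji
  · rw [canF, if_pos rfl, hdivv]
    have h9 : Multiset.card (f i).2 + 1 - 1 = Multiset.card (f i).2 := by omega
    rw [h9, ← hM, ← hD]
  · rw [canF, if_neg hji, hCzero j hji]

lemma scase_congr {f g : Fin (m + 1) → Multiset ℕ × Multiset ℕ}
    (h : ∀ i, C f i = C g i) : scase f ↔ scase g := by
  rw [scase, scase, vmax_congr (U_congr h), vmin_congr (U_congr h),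
    imax_congr h, imin_congr h]

open Classical in
/-- The second involution: in the degenerate single-value single-component case,
conjugate the divisor; otherwise toggle the overline of the minimal part. -/
noncomputable def theta (N : ℕ) (f : Fin (m + 1) → Multiset ℕ × Multiset ℕ) :
    Fin (m + 1) → Multiset ℕ × Multiset ℕ :=
  if scase f then canF (N / vmax f) (vmax f) (imax f) else tau f

lemma theta_props {f : Fin (m + 1) → Multiset ℕ × Multiset ℕ}
    (hO : Odd N) (hsq : ∀ r : ℕ, r * r ≠ N)
    (hf : f ∈ Sset m N) (hp : pOv f) :
    theta N f ∈ Sset m N ∧ pOv (theta N f) ∧ theta N (theta N f) = f ∧ theta N f ≠ f := by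
  have hN : N ≠ 0 := by rcases hO with ⟨r, hr⟩; omega
  have hne : U f ≠ 0 := U_ne hf hN
  by_cases hs : scase f
  · obtain ⟨hvpos, hdvd, hcan⟩ := struct hf hne hs hp
    have hth : theta N f = canF (N / vmax f) (vmax f) (imax f) := if_pos hs
    have hv'pos : 0 < N / vmax f := Nat.div_pos (Nat.le_of_dvd (Nat.pos_of_ne_zero hN) hdvd) hvpos
    have hdvd' : N / vmax f ∣ N := ⟨vmax f, (Nat.div_mul_cancel hdvd).symm⟩
    have hv'odd : Odd (N / vmax f) := by
      rcases Nat.even_or_odd (N / vmax f) with he | ho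
      · exfalso
        obtain ⟨c, hc⟩ := dvd_trans he.two_dvd hdvd'
        exact (Nat.not_even_iff_odd.2 hO) ⟨c, by omega⟩
      · exact ho
    have hvc' : (N / vmax f) * vmax f = N := Nat.div_mul_cancel hdvd
    have hmem' : theta N f ∈ Sset m N := by
      rw [hth]; exact canF_mem hv'odd hvpos hvc' _
    have hpov' : pOv (theta N f) := by
      rw [hth]; exact canF_pOv _ hvpos _
    have hscase' : scase (theta N f) := by
      rw [hth, scase, canF_vmax _ hvpos, canF_vmin _ hvpos, canF_imax _ hvpos,
        canF_imin _ hvpos]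
      exact ⟨rfl, rfl⟩
    refine ⟨hmem', hpov', ?_, ?_⟩
    · have e1 : vmax (theta N f) = N / vmax f := by rw [hth, canF_vmax _ hvpos]
      have e2 : imax (theta N f) = imax f := by rw [hth, canF_imax _ hvpos]
      rw [theta, if_pos hscase', e1, e2, Nat.div_div_self hdvd hN]
      exact hcan.symm
    · rw [hth]
      intro hcon
      have h2 := congrFun (hcon.trans hcan) (imax f)
      have h3 : ({N / vmax f} : Multiset ℕ) = {vmax f} := by
        have := congrArg Prod.fst h2
        simpa [canF] using this
      have h4 : N / vmax f = vmax f := Multiset.singleton_inj.1 h3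
      exact hsq (vmax f) (by rw [← hvc', h4])
  · have hth : theta N f = tau f := if_neg hs
    have hC := tau_C hne
    have hmem' : theta N f ∈ Sset m N := by rw [hth]; exact tau_mem hf hne
    have hpov' : pOv (theta N f) := by
      rw [hth, pOv, imax_congr hC, vmax_congr (U_congr hC)]
      by_cases him : imin f = imax f
      · have hvv : vmin f ≠ vmax f := by
          intro h; exact hs ⟨h, him⟩
        rw [tau, tgl, him, Function.update_self]
        rw [tog]
        split_ifs with h
        · exact (Multiset.mem_erase_of_ne (Ne.symm hvv)).2 hp
        · exact Multiset.mem_cons_of_mem hp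
      · rw [tau, tgl, Function.update_of_ne (Ne.symm him)]
        exact hp
    refine ⟨hmem', hpov', ?_, ?_⟩
    · have hs' : ¬ scase (theta N f) := by
        rw [hth, scase_congr hC]
        exact hs
      rw [theta, if_neg hs', hth]
      exact tau_tau hf hne
    · rw [hth]
      intro hcon
      have h1 : vmin f ∈ ((tau f) (imin f)).1 ↔ vmin f ∉ (f (imin f)).1 := by
        rw [tau, tgl, Function.update_self]
        exact tog_mem_fst (hf.1 (imin f)).1
      rw [hcon] at h1
      exact iff_not_self h1


lemma Sset_finite (m N : ℕ) : (Sset m N).Finite := by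
  classical
  set B : Multiset ℕ := N • (Finset.range (N + 1)).val with hB
  have key : ∀ (s : Multiset ℕ), (∀ x ∈ s, Odd x) → s.sum ≤ N → s ≤ B := by
    intro s hodd hsum
    rw [Multiset.le_iff_count]
    intro a
    by_cases ha : a ∈ s
    · have hapos : 1 ≤ a := (hodd a ha).pos
      have haS : a ≤ s.sum := by
        have h1 : a + (s.erase a).sum = s.sum := by
          rw [← Multiset.sum_cons, Multiset.cons_erase ha]
        omega
      have haleN : a ≤ N := le_trans haS hsum
      have hcard : Multiset.card s ≤ N := by
        have h2 := Multiset.card_nsmul_le_sum (s := s) (a := 1) (fun x hx => (hodd x hx).pos)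
        rw [smul_eq_mul, mul_one] at h2
        omega
      have hcb : Multiset.count a B = N := by
        rw [hB, Multiset.count_nsmul]
        have : Multiset.count a (Finset.range (N + 1)).val = 1 :=
          Multiset.count_eq_one_of_mem (Finset.range (N + 1)).nodup
            (by rw [← Finset.mem_def]; exact Finset.mem_range.2 (by omega))
        rw [this, mul_one]
      rw [hcb]
      exact le_trans (Multiset.count_le_card a s) hcard
    · rw [Multiset.count_eq_zero_of_notMem ha]
      exact Nat.zero_le _
  have hQfin : ({p : Multiset ℕ × Multiset ℕ | p.1 ≤ B ∧ p.2 ≤ B}).Finite := by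
    have h1 : {t : Multiset ℕ | t ≤ B}.Finite := by
      have he : {t : Multiset ℕ | t ≤ B} = ↑(B.powerset.toFinset) := by
        ext t
        simp [Multiset.mem_powerset]
      rw [he]
      exact (B.powerset.toFinset).finite_toSet
    exact (h1.prod h1).subset (fun p hp => Set.mem_prod.2 ⟨hp.1, hp.2⟩)
  refine (Set.Finite.pi' (fun _ => hQfin)).subset ?_
  intro f hf
  have hsums : ∀ i, (f i).1.sum + (f i).2.sum ≤ N := by
    intro i
    rw [← hf.2]
    exact Finset.single_le_sum (f := fun j => (f j).1.sum + (f j).2.sum)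
      (fun j _ => Nat.zero_le _) (Finset.mem_univ i)
  intro i
  exact ⟨key _ (hf.1 i).2.1 (by have := hsums i; omega),
    key _ (hf.1 i).2.2 (by have := hsums i; omega)⟩

theorem four_dvd_card (m N : ℕ) (hO : Odd N) (hsq : ∀ r : ℕ, r * r ≠ N) :
    4 ∣ (Sset m N).ncard := by
  classical
  have hN : N ≠ 0 := by rcases hO with ⟨r, hr⟩; omega
  have hfin := Sset_finite m N
  rw [Set.ncard_eq_toFinset_card _ hfin]
  set t := hfin.toFinset with ht
  have hmem : ∀ f, f ∈ t ↔ f ∈ Sset m N := fun f => Set.Finite.mem_toFinset hfin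
  have hsplit := Finset.card_filter_add_card_filter_not (s := t) (p := pOv)
  have hbij : (t.filter (fun f => ¬ pOv f)).card = (t.filter pOv).card := by
    apply Finset.card_bij' (fun f _ => sigma f) (fun f _ => sigma f)
    · intro f hf
      rw [Finset.mem_filter] at hf ⊢
      have hfS := (hmem f).1 hf.1
      have hne := U_ne hfS hN
      refine ⟨(hmem _).2 (sigma_mem hfS hne), ?_⟩
      rw [pOv_sigma hfS hne]
      exact hf.2
    · intro f hf
      rw [Finset.mem_filter] at hf ⊢
      have hfS := (hmem f).1 hf.1
      have hne := U_ne hfS hN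
      refine ⟨(hmem _).2 (sigma_mem hfS hne), ?_⟩
      rw [pOv_sigma hfS hne]
      exact not_not_intro hf.2
    · intro f hf
      rw [Finset.mem_filter] at hf
      exact sigma_sigma ((hmem f).1 hf.1) (U_ne ((hmem f).1 hf.1) hN)
    · intro f hf
      rw [Finset.mem_filter] at hf
      exact sigma_sigma ((hmem f).1 hf.1) (U_ne ((hmem f).1 hf.1) hN)
  have h2 : Even (t.filter pOv).card := by
    apply even_card_of_involution _ (theta N)
    · intro f hf
      rw [Finset.mem_filter] at hf ⊢
      obtain ⟨a, b, _, _⟩ := theta_props hO hsq ((hmem f).1 hf.1) hf.2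
      exact ⟨(hmem _).2 a, b⟩
    · intro f hf
      rw [Finset.mem_filter] at hf
      exact (theta_props hO hsq ((hmem f).1 hf.1) hf.2).2.2.1
    · intro f hf
      rw [Finset.mem_filter] at hf
      exact (theta_props hO hsq ((hmem f).1 hf.1) hf.2).2.2.2
  obtain ⟨d, hd⟩ := h2
  refine ⟨d, ?_⟩
  omega

end Tuples

end OPTAux

/-- For all `n ≥ 0` and `k ≥ 0`, `OPT_{2k+1}(8n+3) ≡ 0 (mod 4)`. -/
theorem opt_odd_tuple_8n_plus_3 (n k : ℕ) :
    OPT (2 * k + 1) (8 * n + 3) ≡ 0 [MOD 4] := by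
  rw [Nat.modEq_zero_iff_dvd]
  have h : OPT (2 * k + 1) (8 * n + 3) = (OPTAux.Sset (2 * k) (8 * n + 3)).ncard := by
    rw [OPT, OPTAux.Sset]
    congr 1
  rw [h]
  apply OPTAux.four_dvd_card
  · exact ⟨4 * n + 1, by ring⟩
  · intro r hr
    have h1 : (r : ZMod 8) * (r : ZMod 8) = 3 := by
      have h2 := congrArg (fun x : ℕ => (x : ZMod 8)) hr
      push_cast at h2
      have h8 : (8 : ZMod 8) = 0 := by decide
      rw [h8, zero_mul, zero_add] at h2
      exact h2
    have h3 : ∀ x : ZMod 8, x * x ≠ 3 := by decide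
    exact h3 _ h1
end

section
/- For all integers n ≥ 0 and k ≥ 0, the number of overpartition (2k+1)-tuples with odd parts satisfies OPT_{2k+1}(8n+4) ≡ 0 (mod 2). -/
section Aux

variable {k : ℕ} [NeZero k]

/-- The first coordinate with nonzero sum (junk value `0` if none). -/
noncomputable def optIdx (f : Fin k → Multiset ℕ × Multiset ℕ) : Fin k :=
  if h : (Finset.univ.filter fun i => (f i).1.sum + (f i).2.sum ≠ 0).Nonempty
  then (Finset.univ.filter fun i => (f i).1.sum + (f i).2.sum ≠ 0).min' h else 0

/-- The largest part at the chosen coordinate (junk value `0` if empty). -/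
noncomputable def optM (f : Fin k → Multiset ℕ × Multiset ℕ) : ℕ :=
  if h : ((f (optIdx f)).1 + (f (optIdx f)).2).toFinset.Nonempty
  then ((f (optIdx f)).1 + (f (optIdx f)).2).toFinset.max' h else 0

/-- Toggle the overline status of the largest part at the first nonempty
coordinate. -/
noncomputable def optTog (f : Fin k → Multiset ℕ × Multiset ℕ) :
    Fin k → Multiset ℕ × Multiset ℕ :=
  if optM f ∈ (f (optIdx f)).1
  then Function.update f (optIdx f)
    (((f (optIdx f)).1).erase (optM f), optM f ::ₘ (f (optIdx f)).2)
  else Function.update f (optIdx f)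
    (optM f ::ₘ (f (optIdx f)).1, ((f (optIdx f)).2).erase (optM f))

variable {f : Fin k → Multiset ℕ × Multiset ℕ}

lemma optIdx_spec (h : ∃ i, (f i).1.sum + (f i).2.sum ≠ 0) :
    (f (optIdx f)).1.sum + (f (optIdx f)).2.sum ≠ 0 := by
  obtain ⟨i, hi⟩ := h
  have hne : (Finset.univ.filter fun i => (f i).1.sum + (f i).2.sum ≠ 0).Nonempty :=
    ⟨i, by simpa using hi⟩
  rw [optIdx, dif_pos hne]
  have := Finset.min'_mem _ hne
  simpa using this

lemma optM_mem (h : ∃ i, (f i).1.sum + (f i).2.sum ≠ 0) :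
    optM f ∈ (f (optIdx f)).1 + (f (optIdx f)).2 := by
  have hs := optIdx_spec h
  have hmul : (f (optIdx f)).1 + (f (optIdx f)).2 ≠ 0 := by
    intro h0
    rw [add_eq_zero] at h0
    simp [h0.1, h0.2] at hs
  have hne : ((f (optIdx f)).1 + (f (optIdx f)).2).toFinset.Nonempty :=
    Multiset.toFinset_nonempty.2 hmul
  rw [optM, dif_pos hne]
  have := Finset.max'_mem _ hne
  simpa [Multiset.mem_toFinset] using this

lemma optTog_apply_ne {j : Fin k} (hj : j ≠ optIdx f) : optTog f j = f j := by
  unfold optTog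
  split <;> exact Function.update_of_ne hj _ _

lemma optTog_sum (h : ∃ i, (f i).1.sum + (f i).2.sum ≠ 0) (j : Fin k) :
    ((optTog f) j).1.sum + ((optTog f) j).2.sum = (f j).1.sum + (f j).2.sum := by
  rcases eq_or_ne j (optIdx f) with rfl | hj
  · have hM := optM_mem h
    by_cases hc : optM f ∈ (f (optIdx f)).1
    · rw [optTog, if_pos hc, Function.update_self]
      have := Multiset.cons_erase hc
      have hs : (f (optIdx f)).1.sum = optM f + ((f (optIdx f)).1.erase (optM f)).sum := by
        conv_lhs => rw [← this]
        simp
      simp only [Multiset.sum_cons]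
      omega
    · have hc2 : optM f ∈ (f (optIdx f)).2 := by
        rcases Multiset.mem_add.1 hM with h1 | h2
        · exact absurd h1 hc
        · exact h2
      rw [optTog, if_neg hc, Function.update_self]
      have := Multiset.cons_erase hc2
      have hs : (f (optIdx f)).2.sum = optM f + ((f (optIdx f)).2.erase (optM f)).sum := by
        conv_lhs => rw [← this]
        simp
      simp only [Multiset.sum_cons]
      omega
  · rw [optTog_apply_ne hj]

lemma optIdx_tog (h : ∃ i, (f i).1.sum + (f i).2.sum ≠ 0) :
    optIdx (optTog f) = optIdx f := by
  have hfil : (Finset.univ.filter fun i => ((optTog f) i).1.sum + ((optTog f) i).2.sum ≠ 0)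
      = (Finset.univ.filter fun i => (f i).1.sum + (f i).2.sum ≠ 0) := by
    apply Finset.filter_congr
    intro i _
    simp [optTog_sum h i]
  rw [optIdx, optIdx, hfil]

lemma optTog_combined (h : ∃ i, (f i).1.sum + (f i).2.sum ≠ 0) :
    ((optTog f) (optIdx f)).1 + ((optTog f) (optIdx f)).2
      = (f (optIdx f)).1 + (f (optIdx f)).2 := by
  have hM := optM_mem h
  by_cases hc : optM f ∈ (f (optIdx f)).1
  · rw [optTog, if_pos hc, Function.update_self]
    calc (f (optIdx f)).1.erase (optM f) + (optM f ::ₘ (f (optIdx f)).2)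
        = optM f ::ₘ ((f (optIdx f)).1.erase (optM f) + (f (optIdx f)).2) := by
          rw [Multiset.add_cons]
      _ = (optM f ::ₘ (f (optIdx f)).1.erase (optM f)) + (f (optIdx f)).2 := by
          rw [Multiset.cons_add]
      _ = (f (optIdx f)).1 + (f (optIdx f)).2 := by rw [Multiset.cons_erase hc]
  · have hc2 : optM f ∈ (f (optIdx f)).2 := by
      rcases Multiset.mem_add.1 hM with h1 | h2
      · exact absurd h1 hc
      · exact h2
    rw [optTog, if_neg hc, Function.update_self]
    calc (optM f ::ₘ (f (optIdx f)).1) + (f (optIdx f)).2.erase (optM f)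
        = optM f ::ₘ ((f (optIdx f)).1 + (f (optIdx f)).2.erase (optM f)) := by
          rw [Multiset.cons_add]
      _ = (f (optIdx f)).1 + (optM f ::ₘ (f (optIdx f)).2.erase (optM f)) := by
          rw [Multiset.add_cons]
      _ = (f (optIdx f)).1 + (f (optIdx f)).2 := by rw [Multiset.cons_erase hc2]

lemma optM_tog (h : ∃ i, (f i).1.sum + (f i).2.sum ≠ 0) :
    optM (optTog f) = optM f := by
  rw [optM, optM, optIdx_tog h, optTog_combined h]

lemma optTog_flip (h : ∃ i, (f i).1.sum + (f i).2.sum ≠ 0)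
    (hnd : (f (optIdx f)).1.Nodup) :
    optM f ∈ ((optTog f) (optIdx f)).1 ↔ optM f ∉ (f (optIdx f)).1 := by
  by_cases hc : optM f ∈ (f (optIdx f)).1
  · rw [optTog, if_pos hc, Function.update_self]
    simp only [hc, not_true_eq_false, iff_false]
    exact hnd.notMem_erase
  · rw [optTog, if_neg hc, Function.update_self]
    simp [hc]

lemma optTog_tog (h : ∃ i, (f i).1.sum + (f i).2.sum ≠ 0)
    (hnd : (f (optIdx f)).1.Nodup) :
    optTog (optTog f) = f := by
  have hM := optM_mem h
  have hflip := optTog_flip h hnd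
  have hidx := optIdx_tog h
  have hMt := optM_tog h
  conv_lhs => rw [optTog]
  rw [hidx, hMt]
  by_cases hc : optM f ∈ (f (optIdx f)).1
  · rw [if_neg (by rw [hflip]; simp [hc])]
    have ht : (optTog f) (optIdx f)
        = ((f (optIdx f)).1.erase (optM f), optM f ::ₘ (f (optIdx f)).2) := by
      rw [optTog, if_pos hc, Function.update_self]
    rw [ht]
    simp only [Multiset.cons_erase hc, Multiset.erase_cons_head]
    rw [optTog, if_pos hc, Function.update_idem]
    exact Function.update_eq_self _ _
  · rw [if_pos (hflip.2 hc)]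
    have hc2 : optM f ∈ (f (optIdx f)).2 := by
      rcases Multiset.mem_add.1 hM with h1 | h2
      · exact absurd h1 hc
      · exact h2
    have ht : (optTog f) (optIdx f)
        = (optM f ::ₘ (f (optIdx f)).1, (f (optIdx f)).2.erase (optM f)) := by
      rw [optTog, if_neg hc, Function.update_self]
    rw [ht]
    simp only [Multiset.erase_cons_head, Multiset.cons_erase hc2]
    rw [optTog, if_neg hc, Function.update_idem]
    exact Function.update_eq_self _ _

lemma optTog_oddOverpartition (h : ∃ i, (f i).1.sum + (f i).2.sum ≠ 0)
    (hop : ∀ i, IsOddOverpartition (f i)) (i : Fin k) :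
    IsOddOverpartition ((optTog f) i) := by
  rcases eq_or_ne i (optIdx f) with rfl | hi
  · have hM := optM_mem h
    obtain ⟨hnd, ho1, ho2⟩ := hop (optIdx f)
    have hModd : Odd (optM f) := by
      rcases Multiset.mem_add.1 hM with h1 | h2
      · exact ho1 _ h1
      · exact ho2 _ h2
    by_cases hc : optM f ∈ (f (optIdx f)).1
    · rw [optTog, if_pos hc, Function.update_self]
      refine ⟨hnd.erase _, ?_, ?_⟩
      · intro x hx
        exact ho1 x (Multiset.mem_of_mem_erase hx)
      · intro x hx
        rcases Multiset.mem_cons.1 hx with rfl | hx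
        · exact hModd
        · exact ho2 x hx
    · rw [optTog, if_neg hc, Function.update_self]
      refine ⟨?_, ?_, ?_⟩
      · rw [Multiset.nodup_cons]
        exact ⟨hc, hnd⟩
      · intro x hx
        rcases Multiset.mem_cons.1 hx with rfl | hx
        · exact hModd
        · exact ho1 x hx
      · intro x hx
        exact ho2 x (Multiset.mem_of_mem_erase hx)
  · rw [optTog_apply_ne hi]
    exact hop i

end Aux

/-- For all `n ≥ 1` and `k ≥ 1`, `OPT k n` is even: the involution toggling
the overline status of the largest part in the first nonempty coordinate is
fixed-point-free. -/
theorem opt_even (k n : ℕ) [NeZero k] (hn : n ≠ 0) : 2 ∣ OPT k n := by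
  set S : Set (Fin k → Multiset ℕ × Multiset ℕ) :=
    {f | (∀ i, IsOddOverpartition (f i)) ∧ (∑ i, ((f i).1.sum + (f i).2.sum)) = n} with hS
  have hex : ∀ f ∈ S, ∃ i, (f i).1.sum + (f i).2.sum ≠ 0 := by
    intro f hf
    by_contra hall
    push_neg at hall
    have : (∑ i, ((f i).1.sum + (f i).2.sum)) = 0 := Finset.sum_eq_zero fun i _ => hall i
    rw [hf.2] at this
    exact hn this
  have hmem : ∀ f ∈ S, optTog f ∈ S := by
    intro f hf
    refine ⟨optTog_oddOverpartition (hex f hf) hf.1, ?_⟩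
    rw [Finset.sum_congr rfl fun i _ => optTog_sum (hex f hf) i]
    exact hf.2
  have hinv : ∀ f ∈ S, optTog (optTog f) = f := by
    intro f hf
    exact optTog_tog (hex f hf) (hf.1 (optIdx f)).1
  set A : Set (Fin k → Multiset ℕ × Multiset ℕ) :=
    S ∩ {f | optM f ∈ (f (optIdx f)).1} with hA
  have hAS : A ⊆ S := Set.inter_subset_left
  have himg : optTog '' A = S \ A := by
    apply Set.eq_of_subset_of_subset
    · rintro _ ⟨f, ⟨hfS, hfP⟩, rfl⟩
      refine ⟨hmem f hfS, ?_⟩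
      rintro ⟨-, hP⟩
      rw [Set.mem_setOf_eq, optIdx_tog (hex f hfS), optM_tog (hex f hfS),
        optTog_flip (hex f hfS) (hfS.1 (optIdx f)).1] at hP
      exact hP hfP
    · rintro g ⟨hgS, hgA⟩
      refine ⟨optTog g, ⟨hmem g hgS, ?_⟩, hinv g hgS⟩
      rw [Set.mem_setOf_eq, optIdx_tog (hex g hgS), optM_tog (hex g hgS),
        optTog_flip (hex g hgS) (hgS.1 (optIdx g)).1]
      intro hP
      exact hgA ⟨hgS, hP⟩
  by_cases hfin : S.Finite
  · have hinj : Set.InjOn optTog A := by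
      intro a ha b hb hab
      have := congrArg optTog hab
      rwa [hinv a (hAS ha), hinv b (hAS hb)] at this
    have h1 : (S \ A).ncard = A.ncard := by
      rw [← himg]
      exact Set.ncard_image_of_injOn hinj
    have h2 : (S \ A).ncard + A.ncard = S.ncard :=
      Set.ncard_diff_add_ncard_of_subset hAS hfin
    refine ⟨A.ncard, ?_⟩
    show S.ncard = 2 * A.ncard
    omega
  · show 2 ∣ S.ncard
    rw [Set.Infinite.ncard hfin]
    exact dvd_zero 2

/-- For all `n ≥ 0` and `k ≥ 0`, `OPT_{2k+1}(8n+4) ≡ 0 (mod 2)`. -/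
theorem opt_odd_tuple_8n_plus_4 (n k : ℕ) :
    OPT (2 * k + 1) (8 * n + 4) ≡ 0 [MOD 2] := by
  have : NeZero (2 * k + 1) := ⟨by omega⟩
  exact (Nat.modEq_zero_iff_dvd).mpr (opt_even (2 * k + 1) (8 * n + 4) (by omega))
end
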